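/- arXiv:1801.02102 — 5 statements merged into one kernel-verified Lean document; each statement's English description precedes it below -/
import Mathlib

section
/- Assume: φ ∈ C([0,∞)) ∩ C¹((0,∞)) with φ(0) = 0, φ > 0 and φ' > 0 on (0,∞); l ∈ C([0,∞)) with l > 0 on (0,∞), l C-increasing on (0,ξ₀) for some ξ₀ > 0, and s ↦ s·φ'(s)/l(s) integrable on (0,1); f ∈ C(ℝ) with f(0)·l(0) = 0, f > 0 and C-increasing on (0,η₀) for some η₀ > 0 and C ≥ 1. Let T > 0, ℘ ∈ C¹([0,T]) with ℘ > 0, and a ∈ C([0,T]) with a > 0. Suppose the Keller–Osserman condition (KO₀) holds: ∫₀^ε ds/K⁻¹(F(s)) < ∞ for some ε ∈ (0,η₀), where K(t) = ∫₀^t s·φ'(s)/l(s) ds and F(t) = ∫₀^t f(s) ds. Then there exists η₁ ∈ (0,η₀] (depending only on φ, f, l, ℘, a, T and the C-increasing constants) such that, for every η ∈ (0,η₁), every w ∈ C¹([0,T]) with w(0) = 0, w(T) = η, 0 ≤ w ≤ η, w' ≥ 0 on [0,T], and t ↦ ℘(t)·φ(w'(t)) differentiable on (0,T) with derivative ℘(t)·a(t)·f(w(t))·l(|w'(t)|),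 satisfies w'(0) = 0. -/
/-!
Suppose `w'(0) > 0`. The flux `g = ℘ φ(w')` is nondecreasing, and by the mean value theorem it
is small on `[0, T/2]` once `η` is small. Hence `v = φ⁻¹(g / P)`, with `P = max ℘`, is a
differentiable velocity with `0 < v ≤ w'`, and `z = ∫ v ≤ w`. Along `(z, v)` the energy
`K(v) - β F(z)` is nondecreasing, where `β = p₀ a₀ / (P C²)`, with `p₀ = min ℘` and `a₀ = min a`,
absorbs the `C`-increasing constants of `f` and `l`. So `K⁻¹(β F(z)) ≤ z'`, and separating
variables gives `T/2 ≤ ∫₀^η du / K⁻¹(β F(u))`. Since `f` is `C`-increasing, `F(s / 2ᵏ) ≤ β F(s)`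
for a suitable `k`, so the right-hand side is at most `2ᵏ ∫₀^η du / K⁻¹(F(u))`, which tends to
`0` with `η` by (KO₀): a contradiction for small `η`.
-/

open Set MeasureTheory

/-- Given `C ≥ 1`, a function `h` is `C`-increasing on `I` if
`sup {h s : s ∈ I, s ≤ t} ≤ C * h t` for every `t ∈ I`. -/
def CIncreasingOn (C : ℝ) (h : ℝ → ℝ) (I : Set ℝ) : Prop :=
  ∀ s ∈ I, ∀ t ∈ I, s ≤ t → h s ≤ C * h t

open Filter Topology intervalIntegral

theorem StrictMonoOn.exists_orderIso_eqOn {f : ℝ → ℝ} {a b : ℝ} (hab : a ≤ b)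
    (hf : StrictMonoOn f (Icc a b)) (hfc : ContinuousOn f (Icc a b)) :
    ∃ e : ℝ ≃o ℝ, EqOn e f (Icc a b) := by
  set c : ℝ → ℝ := fun x => max a (min b x)
  have hc : ∀ x, c x ∈ Icc a b := fun x => ⟨le_max_left _ _, max_le hab (min_le_left _ _)⟩
  have hc_mono : Monotone c := fun x y hxy => max_le_max le_rfl (min_le_min le_rfl hxy)
  have hc_sub : Monotone fun x => x - c x := by
    intro x y hxy
    simp only [c]
    rcases le_total b x with h | h <;> rcases le_total b y with h' | h' <;>
      simp only [min_eq_left, min_eq_right, *] <;>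
      rcases le_total a x with g | g <;> rcases le_total a y with g' | g' <;>
      simp only [max_eq_left, max_eq_right, *] <;> linarith
  -- continue `f` with slope one outside `[a, b]`
  set E : ℝ → ℝ := fun x => f (c x) + (x - c x)
  have hE_mono : StrictMono E := by
    intro x y hxy
    rcases (hc_mono hxy.le).lt_or_eq with h | h
    · have := hf (hc x) (hc y) h
      have := hc_sub hxy.le
      simp only [E]; linarith
    · simp only [E, h]; linarith
  have hE_cont : Continuous E := by
    have : Continuous c := by fun_prop
    exact (hfc.comp_continuous this hc).add (continuous_id.sub this)
  have hE_ge : ∀ x, f a + (x - b) ≤ E x := fun x => by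
    have := hf.monotoneOn ⟨le_rfl, hab⟩ (hc x) (hc x).1
    have := (hc x).2
    simp only [E]; linarith
  have hE_le : ∀ x, E x ≤ f b + (x - a) := fun x => by
    have := hf.monotoneOn (hc x) ⟨hab, le_rfl⟩ (hc x).2
    have := (hc x).1
    simp only [E]; linarith
  have hE_surj : Function.Surjective E := hE_cont.surjective
    (tendsto_atTop_mono hE_ge (tendsto_atTop_add_const_left _ _
      (tendsto_atTop_add_const_right _ _ tendsto_id)))
    (tendsto_atBot_mono hE_le (tendsto_atBot_add_const_left _ _
      (tendsto_atBot_add_const_right _ _ tendsto_id)))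
  refine ⟨StrictMono.orderIsoOfSurjective E hE_mono hE_surj, fun x hx => ?_⟩
  simp [E, c, max_eq_right hx.1, min_eq_right hx.2]

namespace OrderIso

variable {e : ℝ ≃o ℝ} {f : ℝ → ℝ}

theorem symm_apply_of_eqOn {s : Set ℝ} (he : EqOn e f s) {x : ℝ} (hx : x ∈ s) :
    e.symm (f x) = x := by
  rw [← he hx, e.symm_apply_apply]

theorem symm_mem_Icc_of_eqOn {a b y : ℝ} (hab : a ≤ b) (he : EqOn e f (Icc a b))
    (hy : y ∈ Icc (f a) (f b)) : e.symm y ∈ Icc a b := by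
  rw [← e.symm_apply_of_eqOn he (left_mem_Icc.2 hab),
    ← e.symm_apply_of_eqOn he (right_mem_Icc.2 hab)]
  exact ⟨e.symm.monotone hy.1, e.symm.monotone hy.2⟩

theorem symm_eq_of_leftInvOn {g : ℝ → ℝ} {a b y : ℝ} (hab : a ≤ b) (he : EqOn e f (Icc a b))
    (hg : ∀ x ∈ Icc a b, g (f x) = x) (hy : y ∈ Icc (f a) (f b)) : g y = e.symm y := by
  have hmem := e.symm_mem_Icc_of_eqOn hab he hy
  conv_lhs => rw [← e.apply_symm_apply y, he hmem]
  exact hg _ hmem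

end OrderIso

theorem ContinuousWithinAt.nonneg_of_pos_on_Ioo {f : ℝ → ℝ} {a r : ℝ} (har : a < r)
    (hf : ContinuousWithinAt f (Ioi a) a) (hpos : ∀ x ∈ Ioo a r, 0 < f x) : 0 ≤ f a :=
  ge_of_tendsto hf (by filter_upwards [Ioo_mem_nhdsGT har] with x hx using (hpos x hx).le)

theorem monotoneOn_Icc_of_hasDerivAt_nonneg {f f' : ℝ → ℝ} {a b : ℝ}
    (hf : ContinuousOn f (Icc a b)) (hf' : ∀ x ∈ Ioo a b, HasDerivAt f (f' x) x)
    (hf'₀ : ∀ x ∈ Ioo a b, 0 ≤ f' x) : MonotoneOn f (Icc a b) :=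
  monotoneOn_of_hasDerivWithinAt_nonneg (convex_Icc a b) hf
    (fun x hx => by rw [interior_Icc] at hx ⊢; exact (hf' x hx).hasDerivWithinAt)
    fun x hx => hf'₀ x (by rwa [interior_Icc] at hx)

section Primitive

variable {q : ℝ → ℝ} {b : ℝ}

theorem strictMonoOn_primitive {a : ℝ} (hq : IntegrableOn q (Icc a b))
    (hpos : ∀ x ∈ Ioo a b, 0 < q x) : StrictMonoOn (fun x => ∫ s in a..x, q s) (Icc a b) := by
  intro x hx y hy hxy
  have hqi : ∀ c ∈ Icc a b, ∀ d ∈ Icc a b, IntervalIntegrable q volume c d := fun c hc d hd =>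
    (hq.mono_set (uIcc_subset_Icc hc hd)).intervalIntegrable
  have ha : a ∈ Icc a b := left_mem_Icc.2 (hx.1.trans hx.2)
  have := intervalIntegral_pos_of_pos_on (hqi x hx y hy)
    (fun s hs => hpos s ⟨hx.1.trans_lt hs.1, hs.2.trans_le hy.2⟩) hxy
  rw [← integral_interval_sub_left (hqi a ha y hy) (hqi a ha x hx)] at this
  simpa using this

theorem exists_orderIso_eqOn_primitive (hb : 0 < b) (hq : IntegrableOn q (Ioo 0 b))
    (hpos : ∀ x ∈ Ioo 0 b, 0 < q x) :
    ∃ e : ℝ ≃o ℝ, EqOn e (fun x => ∫ s in 0..x, q s) (Icc 0 b) := by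
  rw [← integrableOn_Icc_iff_integrableOn_Ioo] at hq
  refine (strictMonoOn_primitive hq hpos).exists_orderIso_eqOn hb.le ?_
  have := continuousOn_primitive_interval (μ := volume) (a := 0) (b := b) (f := q)
    (by rwa [uIcc_of_le hb.le])
  rwa [uIcc_of_le hb.le] at this

theorem hasDerivAt_primitive_of_mem_Ioo {x : ℝ} (hq : IntegrableOn q (Ioo 0 b))
    (hqc : ContinuousOn q (Ioo 0 b)) (hx : x ∈ Ioo 0 b) :
    HasDerivAt (fun x => ∫ s in 0..x, q s) (q x) x := by
  rw [← integrableOn_Icc_iff_integrableOn_Ioo] at hq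
  exact integral_hasDerivAt_right
    ((intervalIntegrable_iff_integrableOn_Icc_of_le hx.1.le).2
      (hq.mono_set (Icc_subset_Icc_right hx.2.le)))
    (hqc.stronglyMeasurableAtFilter isOpen_Ioo x hx) (hqc.continuousAt (Ioo_mem_nhds hx.1 hx.2))

end Primitive

section CIncreasing

variable {C η₀ : ℝ} {f : ℝ → ℝ}

theorem CIncreasingOn.integral_le (hf : CIncreasingOn C f (Ioo 0 η₀)) (hfc : Continuous f)
    {x : ℝ} (hx : x ∈ Ioo 0 η₀) : ∫ s in 0..x, f s ≤ x * (C * f x) := by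
  calc ∫ s in 0..x, f s ≤ ∫ _ in 0..x, C * f x :=
        integral_mono_on_of_le_Ioo hx.1.le (hfc.intervalIntegrable _ _) intervalIntegrable_const
          fun s hs => hf s ⟨hs.1, hs.2.trans hx.2⟩ x hx hs.2.le
    _ = x * (C * f x) := by rw [intervalIntegral.integral_const, sub_zero, smul_eq_mul]

theorem CIncreasingOn.le_integral (hf : CIncreasingOn C f (Ioo 0 η₀)) (hC : 0 < C)
    (hfc : Continuous f) {x : ℝ} (hx : 0 < x) (h2x : 2 * x < η₀) :
    x * (f x / C) ≤ ∫ s in x..2 * x, f s := by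
  calc x * (f x / C) = ∫ _ in x..2 * x, f x / C := by
        rw [intervalIntegral.integral_const, smul_eq_mul]; ring
    _ ≤ ∫ s in x..2 * x, f s := by
      refine integral_mono_on (by linarith) intervalIntegrable_const (hfc.intervalIntegrable _ _)
        fun s hs => (div_le_iff₀' hC).2 (hf x ⟨hx, by linarith⟩ s ⟨?_, ?_⟩ hs.1) <;>
        linarith [hs.1, hs.2]

theorem CIncreasingOn.integral_two_mul (hf : CIncreasingOn C f (Ioo 0 η₀)) (hC : 0 < C)
    (hfc : Continuous f) {x : ℝ} (hx : 0 < x) (h2x : 2 * x < η₀) :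
    (1 + (C ^ 2)⁻¹) * ∫ s in 0..x, f s ≤ ∫ s in 0..2 * x, f s := by
  have hsplit := integral_add_adjacent_intervals (hfc.intervalIntegrable (μ := volume) 0 x)
    (hfc.intervalIntegrable x (2 * x))
  have hle := hf.integral_le hfc ⟨hx, by linarith⟩
  have hge := hf.le_integral hC hfc hx h2x
  have : (C ^ 2)⁻¹ * ∫ s in 0..x, f s ≤ x * (f x / C) := by
    calc (C ^ 2)⁻¹ * ∫ s in 0..x, f s ≤ (C ^ 2)⁻¹ * (x * (C * f x)) := by gcongr
      _ = x * (f x / C) := by field_simp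
  linarith

theorem CIncreasingOn.exists_integral_div_two_pow_le (hf : CIncreasingOn C f (Ioo 0 η₀))
    (hC : 0 < C) (hfc : Continuous f) (hfpos : ∀ t ∈ Ioo 0 η₀, 0 < f t) {β : ℝ} (hβ : 0 < β) :
    ∃ k : ℕ, ∀ s ∈ Ioo 0 η₀, ∫ u in 0..s / 2 ^ k, f u ≤ β * ∫ u in 0..s, f u := by
  obtain ⟨k, hk⟩ :=
    pow_unbounded_of_one_lt β⁻¹ (lt_add_of_pos_right 1 (by positivity : 0 < (C ^ 2)⁻¹))
  refine ⟨k, fun s hs => ?_⟩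
  have hiter : ∀ j : ℕ, (1 + (C ^ 2)⁻¹) ^ j * ∫ u in 0..s / 2 ^ j, f u ≤ ∫ u in 0..s, f u := by
    intro j
    induction j with
    | zero => simp
    | succ j ih =>
      have hhalf : 2 * (s / 2 ^ (j + 1)) = s / 2 ^ j := by field_simp; ring
      have := hf.integral_two_mul hC hfc (x := s / 2 ^ (j + 1)) (div_pos hs.1 (by positivity))
        (hhalf ▸ (div_le_self hs.1.le (one_le_pow₀ one_le_two)).trans_lt hs.2)
      rw [hhalf] at this
      calc _ = (1 + (C ^ 2)⁻¹) ^ j * ((1 + (C ^ 2)⁻¹) * ∫ u in 0..s / 2 ^ (j + 1), f u) := by ring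
        _ ≤ _ := by gcongr
        _ ≤ _ := ih
  have hsk : s / 2 ^ k ≤ s := div_le_self hs.1.le (one_le_pow₀ one_le_two)
  have hpos : 0 < ∫ u in 0..s / 2 ^ k, f u :=
    intervalIntegral_pos_of_pos_on (hfc.intervalIntegrable _ _)
      (fun u hu => hfpos u ⟨hu.1, hu.2.trans_le (hsk.trans hs.2.le)⟩) (div_pos hs.1 (by positivity))
  calc ∫ u in 0..s / 2 ^ k, f u = β * (β⁻¹ * ∫ u in 0..s / 2 ^ k, f u) := by field_simp
    _ ≤ β * ((1 + (C ^ 2)⁻¹) ^ k * ∫ u in 0..s / 2 ^ k, f u) := by gcongr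
    _ ≤ β * ∫ u in 0..s, f u := by gcongr; exact hiter k

end CIncreasing

theorem sub_le_integral_inv_of_le_deriv {z v Φ : ℝ → ℝ} {s t : ℝ} (hst : s ≤ t)
    (hz : ContinuousOn z (Icc s t)) (hzv : ∀ x ∈ Ioo s t, HasDerivAt z (v x) x)
    (hv : ContinuousOn v (Icc s t)) (hΦ : ContinuousOn Φ (z '' Icc s t))
    (hΦpos : ∀ x ∈ Icc s t, 0 < Φ (z x)) (hΦv : ∀ x ∈ Icc s t, Φ (z x) ≤ v x) :
    t - s ≤ ∫ u in z s..z t, (Φ u)⁻¹ := by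
  have hΦinv : ContinuousOn (fun u => (Φ u)⁻¹) (z '' Icc s t) :=
    hΦ.inv₀ fun _ ⟨x, hx, hxu⟩ => hxu ▸ (hΦpos x hx).ne'
  calc t - s = ∫ _ in s..t, (1 : ℝ) := by simp
    _ ≤ ∫ x in s..t, ((fun u => (Φ u)⁻¹) ∘ z) x * v x := by
      refine integral_mono_on hst intervalIntegrable_const ?_ fun x hx => ?_
      · refine ContinuousOn.intervalIntegrable ?_
        rw [uIcc_of_le hst]
        exact (hΦinv.comp hz (mapsTo_image z _)).mul hv
      · rw [Function.comp_apply, inv_mul_eq_div, one_le_div (hΦpos x hx)]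
        exact hΦv x hx
    _ = ∫ u in z s..z t, (Φ u)⁻¹ := by
      rw [← uIcc_of_le hst] at hz hv hΦinv
      refine integral_comp_mul_deriv'' hz (fun x hx => ?_) hv hΦinv
      rw [min_eq_left hst, max_eq_right hst] at hx
      exact (hzv x hx).hasDerivWithinAt

theorem le_integral_inv_of_le_deriv {z v Φ : ℝ → ℝ} {S δ : ℝ} (hS : 0 < S)
    (hz : ContinuousOn z (Icc 0 S)) (hzv : ∀ t ∈ Ioo 0 S, HasDerivAt z (v t) t)
    (hv : ContinuousOn v (Icc 0 S)) (hzmem : ∀ t ∈ Ioc 0 S, z t ∈ Ioc 0 δ)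
    (hΦ : ContinuousOn Φ (Ioc 0 δ)) (hΦpos : ∀ u ∈ Ioc 0 δ, 0 < Φ u)
    (hΦv : ∀ t ∈ Ioc 0 S, Φ (z t) ≤ v t) (hint : IntegrableOn (fun u => (Φ u)⁻¹) (Ioc 0 δ)) :
    S ≤ ∫ u in 0..δ, (Φ u)⁻¹ := by
  -- the integrand may blow up at `z 0`, so integrate over `[s, S]` and let `s → 0`
  refine le_of_forall_pos_le_add fun ε hε => ?_
  set s := min ε S
  have hs : 0 < s := lt_min hε hS
  have hsub : Icc s S ⊆ Ioc 0 S := fun t ht => ⟨hs.trans_le ht.1, ht.2⟩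
  have hzv' : ∀ t ∈ Ioo s S, HasDerivAt z (v t) t := fun t ht =>
    hzv t ⟨hs.trans ht.1, ht.2⟩
  have hv_pos : ∀ t ∈ Icc s S, 0 < Φ (z t) := fun t ht => hΦpos _ (hzmem t (hsub ht))
  have hz_mono : MonotoneOn z (Icc s S) := by
    refine monotoneOn_Icc_of_hasDerivAt_nonneg (hz.mono (hsub.trans Ioc_subset_Icc_self)) hzv'
      fun t ht => ?_
    have ht' := Ioo_subset_Icc_self ht
    exact (hv_pos t ht').le.trans (hΦv t (hsub ht'))
  have hsS : s ≤ S := min_le_right ε S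
  have himage : z '' Icc s S ⊆ Ioc 0 δ := by
    rintro _ ⟨t, ht, rfl⟩
    exact hzmem t (hsub ht)
  have hlen := sub_le_integral_inv_of_le_deriv hsS (hz.mono (hsub.trans Ioc_subset_Icc_self))
    hzv' (hv.mono (hsub.trans Ioc_subset_Icc_self)) (hΦ.mono himage) hv_pos
    fun t ht => hΦv t (hsub ht)
  have hmono : ∫ u in z s..z S, (Φ u)⁻¹ ≤ ∫ u in 0..δ, (Φ u)⁻¹ :=
    integral_mono_interval (hzmem s (hsub (left_mem_Icc.2 hsS))).1.le
      (hz_mono (left_mem_Icc.2 hsS) (right_mem_Icc.2 hsS) hsS)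
      (hzmem S (hsub (right_mem_Icc.2 hsS))).2
      (ae_restrict_of_forall_mem measurableSet_Ioc fun u hu => (inv_pos.2 (hΦpos u hu)).le)
      ((intervalIntegrable_iff_integrableOn_Ioc_of_le
        ((hzmem S ⟨hS, le_rfl⟩).1.le.trans (hzmem S ⟨hS, le_rfl⟩).2)).2 hint)
  linarith [min_le_left ε S]

theorem exists_primitive_pos_le {v w w' : ℝ → ℝ} {S : ℝ} (hS : 0 ≤ S)
    (hv : ContinuousOn v (Icc 0 S)) (hvpos : ∀ t ∈ Icc 0 S, 0 < v t)
    (hw : ContinuousOn w (Icc 0 S)) (hwd : ∀ t ∈ Ioo 0 S, HasDerivAt w (w' t) t)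
    (hvw : ∀ t ∈ Ioo 0 S, v t ≤ w' t) :
    ∃ z : ℝ → ℝ, ContinuousOn z (Icc 0 S) ∧ (∀ t ∈ Ioo 0 S, HasDerivAt z (v t) t) ∧ z 0 = 0 ∧
      ∀ t ∈ Ioc 0 S, 0 < z t ∧ z t ≤ w t - w 0 := by
  have hvi : ∀ t ∈ Icc 0 S, IntervalIntegrable v volume 0 t := fun t ht =>
    (hv.mono (Icc_subset_Icc_right ht.2)).intervalIntegrable_of_Icc ht.1
  refine ⟨fun t => ∫ s in 0..t, v s, ?_, fun t ht => ?_, integral_same, fun t ht => ⟨?_, ?_⟩⟩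
  · have := continuousOn_primitive_interval (μ := volume) (a := 0) (b := S) (f := v)
      (by rw [uIcc_of_le hS]; exact hv.integrableOn_Icc)
    rwa [uIcc_of_le hS] at this
  · exact integral_hasDerivAt_right (hvi t (Ioo_subset_Icc_self ht))
      ((hv.mono Ioo_subset_Icc_self).stronglyMeasurableAtFilter isOpen_Ioo t ht)
      (hv.continuousAt (Icc_mem_nhds ht.1 ht.2))
  · exact intervalIntegral_pos_of_pos_on (hvi t (Ioc_subset_Icc_self ht))
      (fun x hx => hvpos x ⟨hx.1.le, hx.2.le.trans ht.2⟩) ht.1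
  · exact integral_le_sub_of_hasDeriv_right_of_le ht.1.le (hw.mono (Icc_subset_Icc_right ht.2))
      (fun x hx => (hwd x ⟨hx.1, hx.2.trans_le ht.2⟩).hasDerivWithinAt)
      (hv.mono (Icc_subset_Icc_right ht.2)).integrableOn_Icc
      fun x hx => hvw x ⟨hx.1, hx.2.trans_le ht.2⟩

theorem exists_velocity_of_flux {φ φ' ψ ψ' u : ℝ → ℝ} {e : ℝ ≃o ℝ} {b S : ℝ} (hb : 0 ≤ b)
    (he : EqOn e φ (Icc 0 b)) (hφ0 : φ 0 = 0) (hφd : ∀ x ∈ Ioo 0 b, HasDerivAt φ (φ' x) x)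
    (hφ' : ∀ x ∈ Ioo 0 b, φ' x ≠ 0) (hψc : ContinuousOn ψ (Icc 0 S))
    (hψd : ∀ t ∈ Ioo 0 S, HasDerivAt ψ (ψ' t) t) (hψ : ∀ t ∈ Icc 0 S, ψ t ∈ Ioo 0 (φ b))
    (hψu : ∀ t ∈ Icc 0 S, ψ t ≤ φ (u t)) (hu : ∀ t ∈ Icc 0 S, u t ∈ Icc 0 b) :
    ∃ v : ℝ → ℝ, ContinuousOn v (Icc 0 S) ∧ (∀ t ∈ Icc 0 S, v t ∈ Ioo 0 b ∧ v t ≤ u t) ∧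
      ∀ t ∈ Ioo 0 S, HasDerivAt v (ψ' t / φ' (v t)) t := by
  have hmem : ∀ t ∈ Icc 0 S, e.symm (ψ t) ∈ Ioo 0 b := fun t ht => by
    have h0 := e.symm_apply_of_eqOn he (left_mem_Icc.2 hb)
    rw [hφ0] at h0
    exact ⟨h0 ▸ e.symm.strictMono (hψ t ht).1,
      e.symm_apply_of_eqOn he (right_mem_Icc.2 hb) ▸ e.symm.strictMono (hψ t ht).2⟩
  refine ⟨fun t => e.symm (ψ t), e.symm.continuous.comp_continuousOn hψc,
    fun t ht => ⟨hmem t ht, ?_⟩, fun t ht => ?_⟩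
  · rw [← e.symm_apply_of_eqOn he (hu t ht)]
    exact e.symm.monotone (hψu t ht)
  · have hvb := hmem t (Ioo_subset_Icc_self ht)
    have hinv : HasDerivAt e.symm (φ' (e.symm (ψ t)))⁻¹ (ψ t) :=
      HasDerivAt.of_local_left_inverse e.symm.continuous.continuousAt
        ((hφd _ hvb).congr_of_eventuallyEq (he.eventuallyEq_of_mem (Icc_mem_nhds hvb.1 hvb.2)))
        (hφ' _ hvb) (Eventually.of_forall e.apply_symm_apply)
    rw [div_eq_inv_mul]
    exact hinv.comp t (hψd t ht)

theorem mul_comp_le_comp_of_rate_le {φ' l f ψ' v z K F : ℝ → ℝ} {b β S : ℝ}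
    (hKc : ContinuousOn K (Icc 0 b)) (hKd : ∀ x ∈ Ioo 0 b, HasDerivAt K (x * φ' x / l x) x)
    (hFd : ∀ u, HasDerivAt F (f u) u) (hφ' : ∀ x ∈ Ioo 0 b, φ' x ≠ 0)
    (hl : ∀ x ∈ Ioo 0 b, 0 < l x) (hv : ContinuousOn v (Icc 0 S))
    (hvmem : ∀ t ∈ Icc 0 S, v t ∈ Ioo 0 b) (hvd : ∀ t ∈ Ioo 0 S, HasDerivAt v (ψ' t / φ' (v t)) t)
    (hz : ContinuousOn z (Icc 0 S)) (hzd : ∀ t ∈ Ioo 0 S, HasDerivAt z (v t) t)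
    (hrate : ∀ t ∈ Ioo 0 S, β * f (z t) * l (v t) ≤ ψ' t) (h0 : β * F (z 0) ≤ K (v 0)) :
    ∀ t ∈ Icc 0 S, β * F (z t) ≤ K (v t) := by
  have hmono : MonotoneOn (fun t => K (v t) - β * F (z t)) (Icc 0 S) := by
    refine monotoneOn_Icc_of_hasDerivAt_nonneg
      ((hKc.comp hv fun t ht => Ioo_subset_Icc_self (hvmem t ht)).sub
        (continuousOn_const.mul ((continuous_iff_continuousAt.2 fun u => (hFd u).continuousAt
          ).comp_continuousOn hz)))
      (fun t ht => ((hKd _ (hvmem t (Ioo_subset_Icc_self ht))).comp t (hvd t ht)).sub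
        (((hFd (z t)).comp t (hzd t ht)).const_mul β)) fun t ht => ?_
    · have hvt := hvmem t (Ioo_subset_Icc_self ht)
      have hlv := hl _ hvt
      have : v t * φ' (v t) / l (v t) * (ψ' t / φ' (v t)) - β * (f (z t) * v t) =
          v t / l (v t) * (ψ' t - β * f (z t) * l (v t)) := by
        field_simp [hφ' _ hvt]
      rw [this]
      exact mul_nonneg (div_nonneg hvt.1.le hlv.le) (sub_nonneg.2 (hrate t ht))
  intro t ht
  have := hmono (left_mem_Icc.2 (ht.1.trans ht.2)) ht ht.1
  simp only at this
  linarith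

theorem le_two_pow_mul_integral_inv {F K z v : ℝ → ℝ} {e : ℝ ≃o ℝ} {b β η₀ δ S : ℝ} {k : ℕ}
    (hS : 0 < S) (hb : 0 ≤ b) (hFc : Continuous F) (hFpos : ∀ u ∈ Ioo 0 η₀, 0 < F u)
    (hk : ∀ s ∈ Ioo 0 η₀, F (s / 2 ^ k) ≤ β * F s) (hδ : δ < η₀)
    (he : EqOn e K (Icc 0 b)) (hK0 : K 0 = 0)
    (hz : ContinuousOn z (Icc 0 S)) (hzv : ∀ t ∈ Ioo 0 S, HasDerivAt z (v t) t)
    (hv : ContinuousOn v (Icc 0 S)) (hzmem : ∀ t ∈ Ioc 0 S, z t ∈ Ioc 0 δ)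
    (henergy : ∀ t ∈ Icc 0 S, v t ∈ Icc 0 b ∧ β * F (z t) ≤ K (v t))
    (hint : IntegrableOn (fun u => (e.symm (F u))⁻¹) (Ioc 0 δ)) :
    S ≤ 2 ^ k * ∫ u in 0..δ, (e.symm (F u))⁻¹ := by
  have h2k : (0 : ℝ) < 2 ^ k := by positivity
  have he0 : e.symm 0 = 0 := by simpa [hK0] using e.symm_apply_of_eqOn he (left_mem_Icc.2 hb)
  have hpos : ∀ u ∈ Ioc 0 δ, 0 < e.symm (F u) := fun u hu =>
    he0 ▸ e.symm.strictMono (hFpos u ⟨hu.1, hu.2.trans_lt hδ⟩)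
  have hscale : ∀ x : ℝ, (x / 2 ^ k)⁻¹ = 2 ^ k * x⁻¹ := fun x => by rw [inv_div, div_eq_mul_inv]
  -- the dilation `F (s / 2 ^ k) ≤ β F s` is absorbed by rescaling the comparison position
  have key := le_integral_inv_of_le_deriv (z := fun t => z t / 2 ^ k) (v := fun t => v t / 2 ^ k)
    (Φ := fun u => e.symm (F u) / 2 ^ k) hS (hz.div_const _)
    (fun t ht => (hzv t ht).div_const _) (hv.div_const _)
    (fun t ht => ⟨div_pos (hzmem t ht).1 h2k,
      (div_le_self (hzmem t ht).1.le (one_le_pow₀ one_le_two)).trans (hzmem t ht).2⟩)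
    ((e.symm.continuous.comp hFc).continuousOn.div_const _)
    (fun u hu => div_pos (hpos u hu) h2k) (fun t ht => ?_)
    (by simp only [hscale]; exact hint.const_mul _)
  · simpa only [hscale, intervalIntegral.integral_const_mul] using key
  · have hzt : z t ∈ Ioo 0 η₀ := ⟨(hzmem t ht).1, (hzmem t ht).2.trans_lt hδ⟩
    refine div_le_div_of_nonneg_right ?_ h2k.le
    calc e.symm (F (z t / 2 ^ k)) ≤ e.symm (K (v t)) :=
          e.symm.monotone ((hk _ hzt).trans (henergy t (Ioc_subset_Icc_self ht)).2)
      _ = v t := e.symm_apply_of_eqOn he (henergy t (Ioc_subset_Icc_self ht)).1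

theorem exists_integrableOn_inv_symm_comp {F K Kinv : ℝ → ℝ} {e : ℝ ≃o ℝ} {b ε : ℝ}
    (hb : 0 ≤ b) (hε : 0 < ε) (he : EqOn e K (Icc 0 b)) (hKinv : ∀ t ∈ Icc 0 b, Kinv (K t) = t)
    (hK0 : K 0 = 0) (hKb : 0 < K b) (hFc : ContinuousAt F 0) (hF0 : F 0 = 0)
    (hF : ∀ u ∈ Ioo 0 ε, 0 ≤ F u) (hKO : IntegrableOn (fun u => 1 / Kinv (F u)) (Ioo 0 ε)) :
    ∃ ε₁ > 0, IntegrableOn (fun u => (e.symm (F u))⁻¹) (Ioc 0 ε₁) := by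
  obtain ⟨r, hr, hFr⟩ := Metric.eventually_nhds_iff.1 (hFc.eventually (gt_mem_nhds (hF0 ▸ hKb)))
  have hsub : Ioc 0 (min ε r / 2) ⊆ Ioo 0 ε ∩ Ioo 0 r := fun u hu =>
    have : min ε r / 2 < min ε r := half_lt_self (lt_min hε hr)
    ⟨⟨hu.1, by linarith [hu.2, min_le_left ε r]⟩, ⟨hu.1, by linarith [hu.2, min_le_right ε r]⟩⟩
  refine ⟨min ε r / 2, by positivity, (hKO.mono_set fun u hu => (hsub hu).1).congr_fun
    (fun u hu => ?_) measurableSet_Ioc⟩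
  have hFu : F u ∈ Icc (K 0) (K b) := ⟨hK0.symm ▸ hF u (hsub hu).1, (hFr (by
    rw [Real.dist_eq, sub_zero, abs_of_pos (hsub hu).2.1]; exact (hsub hu).2.2)).le⟩
  simp only [one_div, OrderIso.symm_eq_of_leftInvOn hb he hKinv hFu]

theorem eventually_integral_lt {G : ℝ → ℝ} {ε r : ℝ} (hε : 0 < ε) (hG : IntegrableOn G (Ioc 0 ε))
    (hr : 0 < r) : ∀ᶠ δ in 𝓝[>] 0, ∫ u in 0..δ, G u < r := by
  have hcont := continuousOn_primitive_interval (μ := volume) (a := 0) (b := ε) (f := G)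
    (by rwa [uIcc_of_le hε.le, integrableOn_Icc_iff_integrableOn_Ioc])
  rw [uIcc_of_le hε.le] at hcont
  have := (hcont 0 (left_mem_Icc.2 hε.le)).mono (Ioc_subset_Icc_self (a := (0 : ℝ)))
  rw [ContinuousWithinAt, nhdsWithin_Ioc_eq_nhdsGT hε, integral_same] at this
  exact this.eventually_lt_const hr

theorem eventually_mul_lt_of_continuousWithinAt {φ : ℝ → ℝ} {T P c : ℝ} (hT : 0 < T) (hc : 0 < c)
    (hφ : ContinuousWithinAt φ (Ici 0) 0) (hφ0 : φ 0 = 0) :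
    ∀ᶠ δ in 𝓝[>] 0, P * φ (2 * δ / T) < c := by
  have hlim : Tendsto (fun δ : ℝ => 2 * δ / T) (𝓝[>] 0) (𝓝[Ici 0] 0) :=
    tendsto_nhdsWithin_of_tendsto_nhds_of_eventually_within _
      (by simpa using ((continuous_const.mul continuous_id).div_const T).tendsto' 0 0 (by simp)
        |>.mono_left nhdsWithin_le_nhds)
      (eventually_nhdsWithin_of_forall fun δ hδ => div_nonneg (by linarith [mem_Ioi.1 hδ]) hT.le)
  have := (hφ.tendsto.comp hlim).const_mul P
  rw [hφ0, mul_zero] at this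
  exact this.eventually_lt_const hc

theorem exists_threshold {φ F K Kinv : ℝ → ℝ} {e : ℝ ≃o ℝ} {b ε T P c r : ℝ} (hb : 0 < b)
    (hε : 0 < ε) (hT : 0 < T) (hc : 0 < c) (hr : 0 < r) (hφ : ContinuousWithinAt φ (Ici 0) 0)
    (hφ0 : φ 0 = 0) (he : EqOn e K (Icc 0 b)) (hKinv : ∀ t ∈ Icc 0 b, Kinv (K t) = t)
    (hK0 : K 0 = 0) (hFc : ContinuousAt F 0) (hF0 : F 0 = 0) (hF : ∀ u ∈ Ioo 0 ε, 0 ≤ F u)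
    (hKO : IntegrableOn (fun u => 1 / Kinv (F u)) (Ioo 0 ε)) :
    ∃ δ ∈ Ioo 0 ε, P * φ (2 * δ / T) < c ∧
      IntegrableOn (fun u => (e.symm (F u))⁻¹) (Ioc 0 δ) ∧ ∫ u in 0..δ, (e.symm (F u))⁻¹ < r := by
  have hKb : 0 < K b := by
    rw [← he (right_mem_Icc.2 hb.le), ← hK0, ← he (left_mem_Icc.2 hb.le)]
    exact e.strictMono hb
  obtain ⟨ε₁, hε₁, hint⟩ :=
    exists_integrableOn_inv_symm_comp hb.le hε he hKinv hK0 hKb hFc hF0 hF hKO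
  obtain ⟨δ, ⟨hδφ, hδr⟩, hδ⟩ := (((eventually_mul_lt_of_continuousWithinAt hT hc hφ hφ0).and
    (eventually_integral_lt hε₁ hint hr)).and (Ioo_mem_nhdsGT (lt_min hε₁ hε))).exists
  exact ⟨δ, ⟨hδ.1, hδ.2.trans_le (min_le_right _ _)⟩, hδφ,
    hint.mono_set (Ioc_subset_Ioc_right (hδ.2.le.trans (min_le_left _ _))), hδr⟩

structure IsDirichletSolution (φ p a f l : ℝ → ℝ) (T η : ℝ) (w w' : ℝ → ℝ) : Prop where
  hasDerivWithinAt : ∀ t ∈ Icc 0 T, HasDerivWithinAt w (w' t) (Icc 0 T) t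
  continuousOn_deriv : ContinuousOn w' (Icc 0 T)
  apply_zero : w 0 = 0
  apply_right : w T = η
  bounds : ∀ t ∈ Icc 0 T, 0 ≤ w t ∧ w t ≤ η ∧ 0 ≤ w' t
  hasDerivAt_flux : ∀ t ∈ Ioo 0 T,
    HasDerivAt (fun s => p s * φ (w' s)) (p t * a t * f (w t) * l |w' t|) t

namespace IsDirichletSolution

variable {φ φ' p a f l w w' F K : ℝ → ℝ} {T η δ b P p₀ : ℝ}

theorem continuousOn (hw : IsDirichletSolution φ p a f l T η w w') : ContinuousOn w (Icc 0 T) :=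
  fun t ht => (hw.hasDerivWithinAt t ht).continuousWithinAt

theorem hasDerivAt (hw : IsDirichletSolution φ p a f l T η w w') {t : ℝ} (ht : t ∈ Ioo 0 T) :
    HasDerivAt w (w' t) t :=
  (hw.hasDerivWithinAt t (Ioo_subset_Icc_self ht)).hasDerivAt (Icc_mem_nhds ht.1 ht.2)

theorem continuousOn_flux (hw : IsDirichletSolution φ p a f l T η w w')
    (hφc : ContinuousOn φ (Ici 0)) (hpc : ContinuousOn p (Icc 0 T)) :
    ContinuousOn (fun t => p t * φ (w' t)) (Icc 0 T) :=
  hpc.mul (hφc.comp hw.continuousOn_deriv fun t ht => (hw.bounds t ht).2.2)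

/-- By the mean value theorem `w' ≤ 2η/T` somewhere in `(T/2, T)`, and the flux is
nondecreasing. -/
theorem flux_lt_of_mem_Icc_half (hw : IsDirichletSolution φ p a f l T η w w') {c : ℝ}
    (hT : 0 < T) (hg : MonotoneOn (fun t => p t * φ (w' t)) (Icc 0 T))
    (hpP : ∀ t ∈ Icc 0 T, p t ≤ P) (hP : 0 ≤ P) (hφ : MonotoneOn φ (Ici 0))
    (hφ_nonneg : ∀ x, 0 ≤ x → 0 ≤ φ x) (hδ : P * φ (2 * δ / T) < c) (hηδ : η ≤ δ) :
    ∀ t ∈ Icc 0 (T / 2), p t * φ (w' t) < c := by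
  have hT2 : T / 2 < T := half_lt_self hT
  have hsub : Icc (T / 2) T ⊆ Icc 0 T := Icc_subset_Icc_left (half_pos hT).le
  obtain ⟨τ, hτ, hslope⟩ := exists_hasDerivAt_eq_slope w w' hT2 (hw.continuousOn.mono hsub)
    fun t ht => hw.hasDerivAt ⟨(half_pos hT).trans ht.1, ht.2⟩
  have hτ' : τ ∈ Icc 0 T := hsub (Ioo_subset_Icc_self hτ)
  have hw'τ := (hw.bounds τ hτ').2.2
  have hslope_le : w' τ ≤ 2 * δ / T := by
    have := (hw.bounds _ (hsub (left_mem_Icc.2 hT2.le))).1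
    rw [hslope, hw.apply_right, show T - T / 2 = T / 2 by ring,
      div_le_div_iff₀ (half_pos hT) hT]
    nlinarith
  intro t ht
  calc p t * φ (w' t) ≤ p τ * φ (w' τ) :=
        hg (Icc_subset_Icc_right hT2.le ht) hτ' (ht.2.trans hτ.1.le)
    _ ≤ P * φ (w' τ) := mul_le_mul_of_nonneg_right (hpP τ hτ') (hφ_nonneg _ hw'τ)
    _ ≤ P * φ (2 * δ / T) := by
      gcongr
      exact hφ hw'τ (hw'τ.trans hslope_le) hslope_le
    _ < c := hδ

/-- `w'` need not be differentiable, but the comparison velocity `v = φ⁻¹(p φ(w') / P)` is;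
dividing by the maximum `P` of `p` keeps `v ≤ w'`. -/
theorem exists_comparison_velocity (hw : IsDirichletSolution φ p a f l T η w w')
    {e : ℝ ≃o ℝ} (hφc : ContinuousOn φ (Ici 0)) (hφ : StrictMonoOn φ (Ici 0))
    (hφ0 : φ 0 = 0) (hφd : ∀ x, 0 < x → HasDerivAt φ (φ' x) x) (hφ' : ∀ x, 0 < x → 0 < φ' x)
    (he : EqOn e φ (Icc 0 b)) (hb : 0 < b) (hpc : ContinuousOn p (Icc 0 T))
    (hp : ∀ t ∈ Icc 0 T, p t ∈ Icc p₀ P) (hp₀ : 0 < p₀) (hT : 0 < T)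
    (hδ : P * φ (2 * δ / T) < p₀ * φ b) (hηδ : η ≤ δ)
    (hrate : ∀ t ∈ Ioo 0 T, 0 ≤ p t * a t * f (w t) * l |w' t|) (hw'0 : 0 < w' 0) :
    ∃ v : ℝ → ℝ, ContinuousOn v (Icc 0 (T / 2)) ∧
      (∀ t ∈ Icc 0 (T / 2), v t ∈ Ioo 0 b ∧ v t ≤ w' t ∧ w' t < b) ∧
      ∀ t ∈ Ioo 0 (T / 2), HasDerivAt v (p t * a t * f (w t) * l |w' t| / P / φ' (v t)) t := by
  set g := fun t => p t * φ (w' t)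
  have hST : Icc 0 (T / 2) ⊆ Icc 0 T := Icc_subset_Icc_right (half_le_self hT.le)
  have h0 : (0 : ℝ) ∈ Icc 0 (T / 2) := left_mem_Icc.2 (half_pos hT).le
  have hP₀ : p₀ ≤ P := (hp 0 (hST h0)).1.trans (hp 0 (hST h0)).2
  have hP : 0 < P := hp₀.trans_le hP₀
  have hφ_nonneg : ∀ x, 0 ≤ x → 0 ≤ φ x := fun x hx => hφ0 ▸ hφ.monotoneOn self_mem_Ici hx hx
  have hg := monotoneOn_Icc_of_hasDerivAt_nonneg (hw.continuousOn_flux hφc hpc)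
    hw.hasDerivAt_flux hrate
  have hg_lt := hw.flux_lt_of_mem_Icc_half hT hg (fun t ht => (hp t ht).2) hP.le hφ.monotoneOn
    hφ_nonneg hδ hηδ
  have hw'_lt : ∀ t ∈ Icc 0 (T / 2), w' t < b := fun t ht => by
    have hw't := (hw.bounds t (hST ht)).2.2
    have : p₀ * φ (w' t) ≤ g t := mul_le_mul_of_nonneg_right (hp t (hST ht)).1 (hφ_nonneg _ hw't)
    exact (hφ.lt_iff_lt hw't hb.le).1 (lt_of_mul_lt_mul_left (this.trans_lt (hg_lt t ht)) hp₀.le)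
  have hg0 : 0 < g 0 := mul_pos (hp₀.trans_le (hp 0 (hST h0)).1)
    (by simpa [hφ0] using hφ self_mem_Ici (mem_Ici.2 hw'0.le) hw'0)
  obtain ⟨v, hvc, hv, hvd⟩ := exists_velocity_of_flux (ψ := fun t => g t / P) (u := w') hb.le he
    hφ0 (fun x hx => hφd x hx.1) (fun x hx => (hφ' x hx.1).ne')
    ((hw.continuousOn_flux hφc hpc).mono hST |>.div_const P)
    (fun t ht => (hw.hasDerivAt_flux t ⟨ht.1, ht.2.trans (half_lt_self hT)⟩).div_const P)
    (fun t ht => ⟨div_pos (hg0.trans_le (hg (hST h0) (hST ht) ht.1)) hP,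
      (div_lt_iff₀' hP).2 ((hg_lt t ht).trans_le
        (mul_le_mul_of_nonneg_right hP₀ (hφ_nonneg _ hb.le)))⟩)
    (fun t ht => (div_le_iff₀' hP).2 (mul_le_mul_of_nonneg_right (hp t (hST ht)).2
      (hφ_nonneg _ (hw.bounds t (hST ht)).2.2)))
    fun t ht => ⟨(hw.bounds t (hST ht)).2.2, (hw'_lt t ht).le⟩
  exact ⟨v, hvc, fun t ht => ⟨(hv t ht).1, (hv t ht).2, hw'_lt t ht⟩, hvd⟩

theorem energy_le (hw : IsDirichletSolution φ p a f l T η w w') {v z : ℝ → ℝ}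
    {eK : ℝ ≃o ℝ} {C ξ₀ η₀ a₀ β : ℝ} (hvc : ContinuousOn v (Icc 0 (T / 2)))
    (hv : ∀ t ∈ Icc 0 (T / 2), v t ∈ Ioo 0 b ∧ v t ≤ w' t ∧ w' t < b)
    (hvd : ∀ t ∈ Ioo 0 (T / 2), HasDerivAt v (p t * a t * f (w t) * l |w' t| / P / φ' (v t)) t)
    (hzc : ContinuousOn z (Icc 0 (T / 2))) (hzd : ∀ t ∈ Ioo 0 (T / 2), HasDerivAt z (v t) t)
    (hz0 : z 0 = 0) (hz : ∀ t ∈ Ioc 0 (T / 2), 0 < z t ∧ z t ≤ w t)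
    (hφ' : ∀ x, 0 < x → 0 < φ' x) (hlpos : ∀ x, 0 < x → 0 < l x)
    (hlC : CIncreasingOn C l (Ioo 0 ξ₀)) (hbξ : b ≤ ξ₀) (hf : ∀ x ∈ Ico 0 η₀, 0 ≤ f x)
    (hfC : CIncreasingOn C f (Ioo 0 η₀)) (hη : η < η₀) (hFd : ∀ u, HasDerivAt F (f u) u)
    (hF0 : F 0 = 0) (heK : EqOn eK K (Icc 0 b)) (hK0 : K 0 = 0)
    (hKd : ∀ x ∈ Ioo 0 b, HasDerivAt K (x * φ' x / l x) x) (hp : ∀ t ∈ Icc 0 T, p t ∈ Icc p₀ P)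
    (ha : ∀ t ∈ Icc 0 T, a₀ ≤ a t) (hp₀ : 0 < p₀) (ha₀ : 0 ≤ a₀) (hT : 0 < T) (hC : 0 ≤ C)
    (hβ : 0 ≤ β) (hβC : β * (P * C ^ 2) ≤ p₀ * a₀) :
    ∀ t ∈ Icc 0 (T / 2), β * F (z t) ≤ K (v t) := by
  have hST : Icc 0 (T / 2) ⊆ Icc 0 T := Icc_subset_Icc_right (half_le_self hT.le)
  have h0 : (0 : ℝ) ∈ Icc 0 (T / 2) := left_mem_Icc.2 (half_pos hT).le
  have hP : 0 < P := hp₀.trans_le ((hp 0 (hST h0)).1.trans (hp 0 (hST h0)).2)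
  refine mul_comp_le_comp_of_rate_le (eK.continuous.continuousOn.congr heK.symm) hKd hFd
    (fun x hx => (hφ' x hx.1).ne') (fun x hx => hlpos x hx.1) hvc (fun t ht => (hv t ht).1) hvd
    hzc hzd (fun t ht => ?_) ?_
  · have ht' := Ioo_subset_Icc_self ht
    obtain ⟨⟨hv0, hvb⟩, hvw', hw'b⟩ := hv t ht'
    obtain ⟨hzt, hzw⟩ := hz t ⟨ht.1, ht.2.le⟩
    have hwη := (hw.bounds t (hST ht')).2.1.trans_lt hη
    have hw'0 : 0 < w' t := hv0.trans_le hvw'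
    have := hf _ ⟨hzt.le.trans hzw, hwη⟩
    have := hlpos _ hv0
    have := hlpos _ hw'0
    have hfl : f (z t) * l (v t) ≤ C ^ 2 * (f (w t) * l (w' t)) := by
      calc f (z t) * l (v t) ≤ (C * f (w t)) * (C * l (w' t)) := by
            gcongr
            · exact hfC _ ⟨hzt, hzw.trans_lt hwη⟩ _ ⟨hzt.trans_le hzw, hwη⟩ hzw
            · exact hlC _ ⟨hv0, hvb.trans_le hbξ⟩ _ ⟨hw'0, hw'b.trans_le hbξ⟩ hvw'
        _ = C ^ 2 * (f (w t) * l (w' t)) := by ring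
    have hpa : p₀ * a₀ ≤ p t * a t :=
      mul_le_mul (hp t (hST ht')).1 (ha t (hST ht')) ha₀ (hp₀.le.trans (hp t (hST ht')).1)
    rw [abs_of_pos hw'0, le_div_iff₀ hP]
    calc β * f (z t) * l (v t) * P ≤ β * (P * C ^ 2) * (f (w t) * l (w' t)) := by
          nlinarith [mul_le_mul_of_nonneg_left hfl (mul_nonneg hβ hP.le)]
      _ ≤ p t * a t * (f (w t) * l (w' t)) :=
          mul_le_mul_of_nonneg_right (hβC.trans hpa) (by positivity)
      _ = p t * a t * f (w t) * l (w' t) := by ring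
  · have hv0 := Ioo_subset_Icc_self (hv 0 h0).1
    have := eK.monotone hv0.1
    rw [heK hv0, heK (left_mem_Icc.2 (hv0.1.trans hv0.2)), hK0] at this
    rwa [hz0, hF0, mul_zero]

theorem half_le_two_pow_mul_integral (hw : IsDirichletSolution φ p a f l T η w w')
    {eφ eK : ℝ ≃o ℝ} {C ξ₀ η₀ a₀ β : ℝ} {k : ℕ} (hφc : ContinuousOn φ (Ici 0))
    (hφ : StrictMonoOn φ (Ici 0)) (hφ0 : φ 0 = 0) (hφd : ∀ x, 0 < x → HasDerivAt φ (φ' x) x)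
    (hφ' : ∀ x, 0 < x → 0 < φ' x) (heφ : EqOn eφ φ (Icc 0 b)) (hlpos : ∀ x, 0 < x → 0 < l x)
    (hl0 : 0 ≤ l 0) (hlC : CIncreasingOn C l (Ioo 0 ξ₀)) (hbξ : b ≤ ξ₀)
    (hf : ∀ x ∈ Ico 0 η₀, 0 ≤ f x) (hfC : CIncreasingOn C f (Ioo 0 η₀))
    (hFd : ∀ u, HasDerivAt F (f u) u) (hF0 : F 0 = 0) (hFpos : ∀ u ∈ Ioo 0 η₀, 0 < F u)
    (hk : ∀ s ∈ Ioo 0 η₀, F (s / 2 ^ k) ≤ β * F s) (heK : EqOn eK K (Icc 0 b)) (hK0 : K 0 = 0)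
    (hKd : ∀ x ∈ Ioo 0 b, HasDerivAt K (x * φ' x / l x) x) (hpc : ContinuousOn p (Icc 0 T))
    (hp : ∀ t ∈ Icc 0 T, p t ∈ Icc p₀ P) (ha : ∀ t ∈ Icc 0 T, a₀ ≤ a t) (hp₀ : 0 < p₀)
    (ha₀ : 0 ≤ a₀) (hT : 0 < T) (hb : 0 < b) (hC : 0 ≤ C) (hβ : 0 ≤ β)
    (hβC : β * (P * C ^ 2) ≤ p₀ * a₀) (hδ : P * φ (2 * δ / T) < p₀ * φ b) (hδη₀ : δ < η₀)
    (hηδ : η ≤ δ) (hint : IntegrableOn (fun u => (eK.symm (F u))⁻¹) (Ioc 0 δ))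
    (hw'0 : 0 < w' 0) :
    T / 2 ≤ 2 ^ k * ∫ u in 0..δ, (eK.symm (F u))⁻¹ := by
  have hST : Icc 0 (T / 2) ⊆ Icc 0 T := Icc_subset_Icc_right (half_le_self hT.le)
  have hrate : ∀ t ∈ Ioo 0 T, 0 ≤ p t * a t * f (w t) * l |w' t| := fun t ht => by
    have ht' := Ioo_subset_Icc_self ht
    have := hf _ ⟨(hw.bounds t ht').1, (hw.bounds t ht').2.1.trans_lt (hηδ.trans_lt hδη₀)⟩
    have : 0 ≤ l |w' t| := (abs_nonneg _).eq_or_lt.elim (fun h => h ▸ hl0) (hlpos _ · |>.le)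
    have : 0 ≤ p t := hp₀.le.trans (hp t ht').1
    have : 0 ≤ a t := ha₀.trans (ha t ht')
    positivity
  obtain ⟨v, hvc, hv, hvd⟩ := hw.exists_comparison_velocity hφc hφ hφ0 hφd hφ' heφ hb hpc hp hp₀
    hT hδ hηδ hrate hw'0
  obtain ⟨z, hzc, hzd, hz0, hz⟩ := exists_primitive_pos_le (half_pos hT).le hvc
    (fun t ht => (hv t ht).1.1) (hw.continuousOn.mono hST)
    (fun t ht => hw.hasDerivAt ⟨ht.1, ht.2.trans (half_lt_self hT)⟩)
    fun t ht => (hv t (Ioo_subset_Icc_self ht)).2.1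
  simp only [hw.apply_zero, sub_zero] at hz
  have hvK := hw.energy_le hvc hv hvd hzc hzd hz0 hz hφ' hlpos hlC hbξ hf hfC
    (hηδ.trans_lt hδη₀) hFd hF0 heK hK0 hKd hp ha hp₀ ha₀ hT hC hβ hβC
  exact le_two_pow_mul_integral_inv (half_pos hT) hb.le
    (continuous_iff_continuousAt.2 fun u => (hFd u).continuousAt) hFpos hk hδη₀ heK hK0 hzc hzd
    hvc (fun t ht => ⟨(hz t ht).1, (hz t ht).2.trans ((hw.bounds t (hST
      (Ioc_subset_Icc_self ht))).2.1.trans hηδ)⟩)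
    (fun t ht => ⟨Ioo_subset_Icc_self (hv t ht).1, hvK t ht⟩) hint

end IsDirichletSolution

theorem stmt_6_general
    (φ φ' l : ℝ → ℝ)
    (hφc : ContinuousOn φ (Ici 0)) (hφ0 : φ 0 = 0)
    (hφpos : ∀ t : ℝ, 0 < t → 0 < φ t)
    (hφd : ∀ t : ℝ, 0 < t → HasDerivAt φ (φ' t) t)
    (hφ'c : ContinuousOn φ' (Ioi 0))
    (hφ'pos : ∀ t : ℝ, 0 < t → 0 < φ' t)
    (hlc : ContinuousOn l (Ici 0)) (hlpos : ∀ t : ℝ, 0 < t → 0 < l t)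
    (C ξ₀ : ℝ) (hC : 1 ≤ C) (hξ₀ : 0 < ξ₀)
    (hlCinc : CIncreasingOn C l (Ioo 0 ξ₀))
    (hint : IntegrableOn (fun s => s * φ' s / l s) (Ioo 0 1))
    (η₀ : ℝ) (hη₀ : 0 < η₀)
    (f : ℝ → ℝ) (hfc : Continuous f)
    (hfpos : ∀ t ∈ Ioo (0:ℝ) η₀, 0 < f t)
    (hfCinc : CIncreasingOn C f (Ioo 0 η₀))
    (T : ℝ) (hT : 0 < T)
    (p p' : ℝ → ℝ)
    (hpd : ∀ t ∈ Icc (0:ℝ) T, HasDerivWithinAt p (p' t) (Icc 0 T) t)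
    (hppos : ∀ t ∈ Icc (0:ℝ) T, 0 < p t)
    (a : ℝ → ℝ) (hac : ContinuousOn a (Icc (0:ℝ) T))
    (hapos : ∀ t ∈ Icc (0:ℝ) T, 0 < a t)
    (F K Kinv : ℝ → ℝ)
    (hF : ∀ t, F t = ∫ s in (0:ℝ)..t, f s)
    (hK : ∀ t, K t = ∫ s in (0:ℝ)..t, s * φ' s / l s)
    (hKinv : ∀ t : ℝ, 0 ≤ t → Kinv (K t) = t)
    (hKO : ∃ ε ∈ Ioo (0:ℝ) η₀, IntegrableOn (fun s => 1 / Kinv (F s)) (Ioo 0 ε)) :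
    ∃ η₁ ∈ Ioc (0:ℝ) η₀, ∀ η ∈ Ioo (0:ℝ) η₁, ∀ w w' : ℝ → ℝ,
      (∀ t ∈ Icc (0:ℝ) T, HasDerivWithinAt w (w' t) (Icc 0 T) t) →
      ContinuousOn w' (Icc (0:ℝ) T) →
      w 0 = 0 → w T = η →
      (∀ t ∈ Icc (0:ℝ) T, 0 ≤ w t ∧ w t ≤ η ∧ 0 ≤ w' t) →
      (∀ t ∈ Ioo (0:ℝ) T,
        HasDerivAt (fun s => p s * φ (w' s)) (p t * a t * f (w t) * l |w' t|) t) →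
      w' 0 = 0 := by
  obtain ⟨ε, hε, hKO⟩ := hKO
  obtain rfl : F = fun t => ∫ s in 0..t, f s := funext hF
  obtain rfl : K = fun t => ∫ s in 0..t, s * φ' s / l s := funext hK
  have hT0 : (0 : ℝ) ∈ Icc 0 T := left_mem_Icc.2 hT.le
  have hpc : ContinuousOn p (Icc 0 T) := fun t ht => (hpd t ht).continuousWithinAt
  obtain ⟨t₀, ht₀, hp₀⟩ := isCompact_Icc.exists_isMinOn ⟨0, hT0⟩ hpc
  obtain ⟨t₁, -, hP⟩ := isCompact_Icc.exists_isMaxOn ⟨0, hT0⟩ hpc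
  obtain ⟨t₂, ht₂, ha₀⟩ := isCompact_Icc.exists_isMinOn ⟨0, hT0⟩ hac
  set b := min ξ₀ 1
  have hb : 0 < b := lt_min hξ₀ one_pos
  have hφ : StrictMonoOn φ (Ici 0) := strictMonoOn_of_hasDerivWithinAt_pos (convex_Ici 0) hφc
    (fun x hx => (hφd x (by rwa [interior_Ici] at hx)).hasDerivWithinAt)
    fun x hx => hφ'pos x (by rwa [interior_Ici] at hx)
  obtain ⟨eφ, heφ⟩ := (hφ.mono Icc_subset_Ici_self).exists_orderIso_eqOn hb.le
    (hφc.mono Icc_subset_Ici_self)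
  have hq : IntegrableOn (fun s => s * φ' s / l s) (Ioo 0 b) :=
    hint.mono_set (Ioo_subset_Ioo_right (min_le_right _ _))
  have hqc : ContinuousOn (fun s => s * φ' s / l s) (Ioo 0 b) :=
    (continuousOn_id.mul (hφ'c.mono fun x hx => hx.1)).div
      (hlc.mono fun x hx => mem_Ici.2 hx.1.le) fun x hx => (hlpos x hx.1).ne'
  obtain ⟨eK, heK⟩ := exists_orderIso_eqOn_primitive hb hq
    fun x hx => div_pos (mul_pos hx.1 (hφ'pos x hx.1)) (hlpos x hx.1)
  have hl0 : 0 ≤ l 0 := ((hlc 0 self_mem_Ici).mono Ioi_subset_Ici_self).nonneg_of_pos_on_Ioo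
    one_pos fun x hx => hlpos x hx.1
  have hf : ∀ x ∈ Ico 0 η₀, 0 ≤ f x := fun x hx => hx.1.eq_or_lt.elim
    (· ▸ hfc.continuousWithinAt.nonneg_of_pos_on_Ioo hη₀ hfpos) fun h => (hfpos x ⟨h, hx.2⟩).le
  have hFd : ∀ u, HasDerivAt (fun t => ∫ s in 0..t, f s) (f u) u := fun u =>
    (hfc.integral_hasStrictDerivAt 0 u).hasDerivAt
  have hFpos : ∀ u ∈ Ioo 0 η₀, 0 < ∫ s in 0..u, f s := fun u hu =>
    intervalIntegral_pos_of_pos_on (hfc.intervalIntegrable _ _)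
      (fun x hx => hfpos x ⟨hx.1, hx.2.trans hu.2⟩) hu.1
  have hP₁ : 0 < p t₁ * C ^ 2 := mul_pos ((hppos t₀ ht₀).trans_le (hP ht₀)) (by positivity)
  have hβ : 0 < p t₀ * a t₂ / (p t₁ * C ^ 2) := div_pos (mul_pos (hppos t₀ ht₀) (hapos t₂ ht₂)) hP₁
  obtain ⟨k, hk⟩ := hfCinc.exists_integral_div_two_pow_le (by linarith) hfc hfpos hβ
  obtain ⟨δ, hδ, hδφ, hδint, hδI⟩ := exists_threshold (P := p t₁) (r := T / 2 / 2 ^ k) hb hε.1 hT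
    (mul_pos (hppos t₀ ht₀) (hφpos _ hb)) (by positivity) (hφc 0 self_mem_Ici) hφ0 heK
    (fun t ht => hKinv t ht.1) integral_same (hFd 0).continuousAt integral_same
    (fun u hu => (hFpos u ⟨hu.1, hu.2.trans hε.2⟩).le) hKO
  refine ⟨δ, ⟨hδ.1, (hδ.2.trans hε.2).le⟩, fun η hη w w' hw hw'c hw0 hwT hbounds hode => ?_⟩
  by_contra hne
  have := IsDirichletSolution.half_le_two_pow_mul_integral ⟨hw, hw'c, hw0, hwT, hbounds, hode⟩
    hφc hφ hφ0 hφd hφ'pos heφ hlpos hl0 hlCinc (min_le_left _ _) hf hfCinc hFd integral_same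
    hFpos hk heK integral_same (fun x hx => hasDerivAt_primitive_of_mem_Ioo hq hqc hx) hpc
    (fun t ht => ⟨hp₀ ht, hP ht⟩) (fun t ht => ha₀ ht) (hppos t₀ ht₀) (hapos t₂ ht₂).le hT hb
    (by linarith) hβ.le (div_mul_cancel₀ _ hP₁.ne').le hδφ (hδ.2.trans hε.2) hη.2.le hδint
    ((hbounds 0 hT0).2.2.lt_of_ne' hne)
  have := (lt_div_iff₀' (by positivity)).1 hδI
  linarith

/-- Proposition 3.8: under the Keller–Osserman condition (KO₀), solutions of
the singular two-point Dirichlet problem `[℘ φ(w')]' = ℘ a f(w) l(|w'|)`,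
`w(0)=0`, `w(T)=η`, with `η` sufficiently small, satisfy `w'(0) = 0`. -/
theorem stmt_6
    (φ φ' l : ℝ → ℝ)
    (hφc : ContinuousOn φ (Ici 0)) (hφ0 : φ 0 = 0)
    (hφpos : ∀ t : ℝ, 0 < t → 0 < φ t)
    (hφd : ∀ t : ℝ, 0 < t → HasDerivAt φ (φ' t) t)
    (hφ'c : ContinuousOn φ' (Ioi 0))
    (hφ'pos : ∀ t : ℝ, 0 < t → 0 < φ' t)
    (hlc : ContinuousOn l (Ici 0)) (hlpos : ∀ t : ℝ, 0 < t → 0 < l t)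
    (C ξ₀ : ℝ) (hC : 1 ≤ C) (hξ₀ : 0 < ξ₀)
    (hlCinc : CIncreasingOn C l (Ioo 0 ξ₀))
    (hint : IntegrableOn (fun s => s * φ' s / l s) (Ioo 0 1))
    (η₀ : ℝ) (hη₀ : 0 < η₀)
    (f : ℝ → ℝ) (hfc : Continuous f) (hfl0 : f 0 * l 0 = 0)
    (hfpos : ∀ t ∈ Ioo (0:ℝ) η₀, 0 < f t)
    (hfCinc : CIncreasingOn C f (Ioo 0 η₀))
    (T : ℝ) (hT : 0 < T)
    (p p' : ℝ → ℝ)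
    (hpd : ∀ t ∈ Icc (0:ℝ) T, HasDerivWithinAt p (p' t) (Icc 0 T) t)
    (hp'c : ContinuousOn p' (Icc (0:ℝ) T))
    (hppos : ∀ t ∈ Icc (0:ℝ) T, 0 < p t)
    (a : ℝ → ℝ) (hac : ContinuousOn a (Icc (0:ℝ) T))
    (hapos : ∀ t ∈ Icc (0:ℝ) T, 0 < a t)
    (F K Kinv : ℝ → ℝ)
    (hF : ∀ t, F t = ∫ s in (0:ℝ)..t, f s)
    (hK : ∀ t, K t = ∫ s in (0:ℝ)..t, s * φ' s / l s)
    (hKinv : ∀ t : ℝ, 0 ≤ t → Kinv (K t) = t)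
    (hKO : ∃ ε ∈ Ioo (0:ℝ) η₀, IntegrableOn (fun s => 1 / Kinv (F s)) (Ioo 0 ε)) :
    ∃ η₁ ∈ Ioc (0:ℝ) η₀, ∀ η ∈ Ioo (0:ℝ) η₁, ∀ w w' : ℝ → ℝ,
      (∀ t ∈ Icc (0:ℝ) T, HasDerivWithinAt w (w' t) (Icc 0 T) t) →
      ContinuousOn w' (Icc (0:ℝ) T) →
      w 0 = 0 → w T = η →
      (∀ t ∈ Icc (0:ℝ) T, 0 ≤ w t ∧ w t ≤ η ∧ 0 ≤ w' t) →
      (∀ t ∈ Ioo (0:ℝ) T,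
        HasDerivAt (fun s => p s * φ (w' s)) (p t * a t * f (w t) * l |w' t|) t) →
      w' 0 = 0 :=
  stmt_6_general φ φ' l hφc hφ0 hφpos hφd hφ'c hφ'pos hlc hlpos C ξ₀ hC hξ₀ hlCinc hint η₀ hη₀ f hfc
    hfpos hfCinc T hT p p' hpd hppos a hac hapos F K Kinv hF hK hKinv hKO
end

section
/- Assume: φ ∈ C([0,∞)) ∩ C¹((0,∞)) with φ(0) = 0, φ > 0 and φ' > 0 on (0,∞); l ∈ C([0,∞)) with l > 0 on [0,∞) and s ↦ s·φ'(s)/l(s) integrable on (0,1); f ∈ C(ℝ) with f(0) = 0, f > 0 on (0,∞), and f C-increasing on (0,η₀) for some η₀ > 0 and C ≥ 1. Let T > 0, ℘ ∈ C¹([0,T]) with ℘ > 0 and ℘' ≥ 0 on (0,T), and a ∈ C([0,T]) with a > 0. Let η ∈ (0,η₀) and let w ∈ C¹([0,T]) satisfy: w'(0) = 0, w(T) = η, 0 ≤ w ≤ η, w' ≥ 0 on [0,T], and t ↦ ℘(t)·φ(w'(t)) differentiable on (0,T) with derivative ℘(t)·a(t)·f(w(t))·l(|w'(t)|). If w(0)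 = 0, then the Keller–Osserman condition (KO₀) holds: ∫₀^ε ds/K⁻¹(F(s)) < ∞ for some ε ∈ (0,η₀), where K(t) = ∫₀^t s·φ'(s)/l(s) ds and F(t) = ∫₀^t f(s) ds. -/
/-!
Let `t₀` be the last zero of `w`. On `(t₀, T)` the function `℘ φ(w')` increases strictly from `0`,
so `w' > 0` there and, by the inverse function theorem for `φ`, `w'` is differentiable. With
`A ≥ max a`, the identity `(φ(w'))' = a f(w) l(w') - φ(w') ℘'/℘ ≤ a f(w) l(w')` makes
`A F(w) - K(w')` nondecreasing, so `K(w') ≤ A F(w)`. The `C`-increasing property gives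
`F(u) ≥ (1 + C⁻²) F(u/2)`, so after finitely many halvings `A F(θ s) ≤ F(s)`, whence
`w' ≤ K⁻¹(F(w/θ))`. The substitution `s = w(t)/θ` then bounds `∫₀^ε ds / K⁻¹(F(s))` by
`(T₁ - t₀)/θ`, where `ε = w(T₁)/θ`.
-/

open Set MeasureTheory

open intervalIntegral Filter Topology

namespace CIncreasingOn

variable {C η₀ : ℝ} {f : ℝ → ℝ}

theorem integral_half_le (hf : CIncreasingOn C f (Ioo 0 η₀)) (hC : 0 < C) (hfc : Continuous f)
    {u : ℝ} (hu : u ∈ Ioo 0 η₀) :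
    (1 + C⁻¹ ^ 2) * ∫ x in (0:ℝ)..u / 2, f x ≤ ∫ x in (0:ℝ)..u, f x := by
  obtain ⟨hu0, huη⟩ := hu
  have hmid : u / 2 ∈ Ioo 0 η₀ := ⟨by linarith, by linarith⟩
  have hlow : ∫ x in (0:ℝ)..u / 2, f x ≤ u / 2 * (C * f (u / 2)) := by
    calc ∫ x in (0:ℝ)..u / 2, f x ≤ ∫ _ in (0:ℝ)..u / 2, C * f (u / 2) :=
          integral_mono_on_of_le_Ioo (by linarith) (hfc.intervalIntegrable _ _)
            intervalIntegrable_const fun x hx =>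
              hf x ⟨hx.1, hx.2.trans hmid.2⟩ _ hmid hx.2.le
      _ = u / 2 * (C * f (u / 2)) := by simp; ring
  have hhigh : u / 2 * (C⁻¹ * f (u / 2)) ≤ ∫ x in u / 2..u, f x := by
    calc u / 2 * (C⁻¹ * f (u / 2)) = ∫ _ in u / 2..u, C⁻¹ * f (u / 2) := by simp; ring
      _ ≤ ∫ x in u / 2..u, f x :=
          integral_mono_on_of_le_Ioo (by linarith) intervalIntegrable_const
            (hfc.intervalIntegrable _ _) fun x hx => by
              rw [inv_mul_le_iff₀ hC]
              exact hf _ hmid x ⟨hmid.1.trans hx.1, hx.2.trans huη⟩ hx.1.le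
  rw [← integral_add_adjacent_intervals (hfc.intervalIntegrable 0 (u / 2))
    (hfc.intervalIntegrable _ u)]
  have : C⁻¹ ^ 2 * (u / 2 * (C * f (u / 2))) = u / 2 * (C⁻¹ * f (u / 2)) := by
    field_simp
  nlinarith [mul_le_mul_of_nonneg_left hlow (sq_nonneg C⁻¹)]

theorem pow_mul_integral_le (hf : CIncreasingOn C f (Ioo 0 η₀)) (hC : 0 < C)
    (hfc : Continuous f) (n : ℕ) {u : ℝ} (hu : u ∈ Ioo 0 η₀) :
    (1 + C⁻¹ ^ 2) ^ n * ∫ x in (0:ℝ)..u / 2 ^ n, f x ≤ ∫ x in (0:ℝ)..u, f x := by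
  induction n with
  | zero => simp
  | succ n ih =>
    have hun : u / 2 ^ n ∈ Ioo 0 η₀ :=
      ⟨by have := hu.1; positivity,
        (div_le_self hu.1.le (one_le_pow₀ one_le_two)).trans_lt hu.2⟩
    calc (1 + C⁻¹ ^ 2) ^ (n + 1) * ∫ x in (0:ℝ)..u / 2 ^ (n + 1), f x
        = (1 + C⁻¹ ^ 2) ^ n * ((1 + C⁻¹ ^ 2) * ∫ x in (0:ℝ)..u / 2 ^ n / 2, f x) := by
          rw [div_div, ← pow_succ]; ring
      _ ≤ (1 + C⁻¹ ^ 2) ^ n * ∫ x in (0:ℝ)..u / 2 ^ n, f x :=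
          mul_le_mul_of_nonneg_left (hf.integral_half_le hC hfc hun) (by positivity)
      _ ≤ ∫ x in (0:ℝ)..u, f x := ih

theorem exists_mul_integral_le (hf : CIncreasingOn C f (Ioo 0 η₀)) (hC : 0 < C)
    (hfc : Continuous f) (hf_nonneg : ∀ x ∈ Ioo 0 η₀, 0 ≤ f x) (A : ℝ) :
    ∃ θ > 0, ∀ s ∈ Ioo 0 η₀, A * ∫ x in (0:ℝ)..θ * s, f x ≤ ∫ x in (0:ℝ)..s, f x := by
  obtain ⟨n, hn⟩ :=
    pow_unbounded_of_one_lt A (lt_add_of_pos_right 1 (by positivity : 0 < C⁻¹ ^ 2))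
  refine ⟨1 / 2 ^ n, by positivity, fun s hs => ?_⟩
  have hθs : 1 / 2 ^ n * s = s / 2 ^ n := by ring
  have hsn : s / 2 ^ n ≤ s := div_le_self hs.1.le (one_le_pow₀ one_le_two)
  have hnn : 0 ≤ ∫ x in (0:ℝ)..s / 2 ^ n, f x := by
    rw [integral_of_le (by have := hs.1; positivity)]
    exact setIntegral_nonneg measurableSet_Ioc fun x hx =>
      hf_nonneg x ⟨hx.1, (hx.2.trans hsn).trans_lt hs.2⟩
  rw [hθs]
  exact (mul_le_mul_of_nonneg_right hn.le hnn).trans (hf.pow_mul_integral_le hC hfc n hs)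

end CIncreasingOn

section Primitive

variable {g K : ℝ → ℝ}

theorem intervalIntegrable_of_integrableOn_Ioo_of_continuousOn_Ioi
    (hg : IntegrableOn g (Ioo 0 1)) (hgc : ContinuousOn g (Ioi 0)) {x y : ℝ}
    (hx : 0 ≤ x) (hy : 0 ≤ y) : IntervalIntegrable g volume x y := by
  have h01 : IntervalIntegrable g volume 0 1 := by
    rw [intervalIntegrable_iff_integrableOn_Ioc_of_le zero_le_one,
      integrableOn_Ioc_iff_integrableOn_Ioo]
    exact hg
  set M := max 1 (max x y)
  have h1M : (1:ℝ) ≤ M := le_max_left _ _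
  have h0M : IntervalIntegrable g volume 0 M := h01.trans <|
    (hgc.mono fun t ht => zero_lt_one.trans_le (uIcc_of_le h1M ▸ ht).1).intervalIntegrable
  refine h0M.mono_set (uIcc_subset_uIcc ?_ ?_) <;> rw [uIcc_of_le (by positivity)]
  exacts [⟨hx, (le_max_left _ _).trans (le_max_right _ _)⟩,
    ⟨hy, (le_max_right _ _).trans (le_max_right _ _)⟩]

theorem continuousOn_Ici_of_integral (hK : ∀ t, K t = ∫ s in (0:ℝ)..t, g s)
    (hg : IntegrableOn g (Ioo 0 1)) (hgc : ContinuousOn g (Ioi 0)) :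
    ContinuousOn K (Ici 0) := by
  intro x (hx : 0 ≤ x)
  have hx1 : 0 ≤ x + 1 := by linarith
  have hc : ContinuousOn K (Icc 0 (x + 1)) := by
    have := continuousOn_primitive_interval' (a := 0)
      (intervalIntegrable_of_integrableOn_Ioo_of_continuousOn_Ioi hg hgc le_rfl hx1)
      left_mem_uIcc
    rw [uIcc_of_le hx1] at this
    exact this.congr fun t _ => hK t
  have hnhds : Icc 0 (x + 1) ∈ 𝓝[Ici 0] x := by
    rw [← Ici_inter_Iic]
    exact inter_mem_nhdsWithin _ (Iic_mem_nhds (lt_add_one x))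
  exact (hc x ⟨hx, by linarith⟩).mono_of_mem_nhdsWithin hnhds

theorem hasDerivAt_of_integral (hK : ∀ t, K t = ∫ s in (0:ℝ)..t, g s)
    (hg : IntegrableOn g (Ioo 0 1)) (hgc : ContinuousOn g (Ioi 0)) {y : ℝ} (hy : 0 < y) :
    HasDerivAt K (g y) y := by
  rw [funext hK]
  exact integral_hasDerivAt_right
    (intervalIntegrable_of_integrableOn_Ioo_of_continuousOn_Ioi hg hgc le_rfl hy.le)
    (hgc.stronglyMeasurableAtFilter isOpen_Ioi y hy) (hgc.continuousAt (Ioi_mem_nhds hy))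

theorem strictMonoOn_Ici_of_integral (hK : ∀ t, K t = ∫ s in (0:ℝ)..t, g s)
    (hg : IntegrableOn g (Ioo 0 1)) (hgc : ContinuousOn g (Ioi 0))
    (hgpos : ∀ y, 0 < y → 0 < g y) : StrictMonoOn K (Ici 0) := by
  refine strictMonoOn_of_hasDerivWithinAt_pos (f' := g) (convex_Ici 0)
    (continuousOn_Ici_of_integral hK hg hgc) (fun y hy => ?_) fun y hy => ?_
  all_goals rw [interior_Ici] at hy
  · exact (hasDerivAt_of_integral hK hg hgc hy).hasDerivWithinAt
  · exact hgpos y hy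

end Primitive

theorem HasDerivAt.of_comp_of_hasStrictDerivAt {φ u : ℝ → ℝ} {φ' d x : ℝ}
    (hφ : HasStrictDerivAt φ φ' (u x)) (hφ' : φ' ≠ 0) (hu : ContinuousAt u x)
    (h : HasDerivAt (fun s => φ (u s)) d x) : HasDerivAt u (φ'⁻¹ * d) x :=
  ((hφ.to_localInverse hφ').hasDerivAt.comp x h).congr_of_eventuallyEq <|
    (hu.eventually (hφ.hasStrictFDerivAt_equiv hφ').eventually_left_inverse).mono
      fun _ hs => hs.symm

theorem HasDerivAt.exists_le_of_hasDerivAt_mul {p z : ℝ → ℝ} {p' b x : ℝ}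
    (hp : HasDerivAt p p' x) (hpz : HasDerivAt (fun s => p s * z s) (p x * b) x)
    (hpx : 0 < p x) (hp' : 0 ≤ p') (hz : 0 ≤ z x) : ∃ d ≤ b, HasDerivAt z d x := by
  refine ⟨b - z x * p' / p x, by have := div_nonneg (mul_nonneg hz hp') hpx.le; linarith, ?_⟩
  have hquot := hpz.div hp hpx.ne'
  refine (hquot.congr_of_eventuallyEq ?_).congr_deriv ?_
  · filter_upwards [hp.continuousAt.eventually_ne hpx.ne'] with s hs
    simp [hs]
  · field_simp

theorem exists_hasDerivAt_comp_le_of_hasDerivAt_mul {φ φ' l p K v : ℝ → ℝ} {x p' β : ℝ}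
    (hφ : HasStrictDerivAt φ (φ' (v x)) (v x)) (hφ' : 0 < φ' (v x)) (hφv : 0 ≤ φ (v x))
    (hK : HasDerivAt K (v x * φ' (v x) / l (v x)) (v x)) (hl : 0 < l (v x))
    (hv : ContinuousAt v x) (hv0 : 0 ≤ v x)
    (hp : HasDerivAt p p' x) (hpx : 0 < p x) (hp' : 0 ≤ p')
    (hpv : HasDerivAt (fun s => p s * φ (v s)) (p x * (β * l (v x))) x) :
    ∃ d ≤ β * v x, HasDerivAt (fun s => K (v s)) d x := by
  obtain ⟨dz, hdz, hz⟩ := hp.exists_le_of_hasDerivAt_mul hpv hpx hp' hφv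
  refine ⟨_, ?_, hK.comp x (hz.of_comp_of_hasStrictDerivAt hφ hφ'.ne' hv)⟩
  calc v x * φ' (v x) / l (v x) * ((φ' (v x))⁻¹ * dz) = v x / l (v x) * dz := by
        field_simp
    _ ≤ v x / l (v x) * (β * l (v x)) := by gcongr
    _ = β * v x := by field_simp

theorem strictMonoOn_Icc_of_hasDerivAt_pos {f f' : ℝ → ℝ} {a b : ℝ}
    (hf : ContinuousOn f (Icc a b)) (hf' : ∀ x ∈ Ioo a b, HasDerivAt f (f' x) x)
    (hpos : ∀ x ∈ Ioo a b, 0 < f' x) : StrictMonoOn f (Icc a b) := by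
  refine strictMonoOn_of_hasDerivWithinAt_pos (f' := f') (convex_Icc a b) hf (fun x hx => ?_)
    fun x hx => ?_
  all_goals rw [interior_Icc] at hx
  exacts [(hf' x hx).hasDerivWithinAt, hpos x hx]

theorem le_of_exists_hasDerivAt_le {U V V' : ℝ → ℝ} {a b : ℝ}
    (hU : ContinuousOn U (Icc a b)) (hV : ContinuousOn V (Icc a b))
    (hU' : ∀ x ∈ Ioo a b, ∃ d ≤ V' x, HasDerivAt U d x)
    (hV' : ∀ x ∈ Ioo a b, HasDerivAt V (V' x) x) (ha : U a ≤ V a) :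
    ∀ x ∈ Icc a b, U x ≤ V x := by
  choose! U' hU'le hU'd using hU'
  have hmono : MonotoneOn (fun x => V x - U x) (Icc a b) := by
    refine monotoneOn_of_hasDerivWithinAt_nonneg (f' := fun x => V' x - U' x) (convex_Icc a b)
      (hV.sub hU) (fun x hx => ?_) fun x hx => ?_
    all_goals rw [interior_Icc] at hx
    · exact ((hV' x hx).sub (hU'd x hx)).hasDerivWithinAt
    · exact sub_nonneg.2 (hU'le x hx)
  intro x hx
  have := hmono (left_mem_Icc.2 (hx.1.trans hx.2)) hx hx.1
  simp only at this
  linarith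

theorem ContinuousOn.mapsTo_rightInvOn_of_leftInvOn {f g : ℝ → ℝ} {a b : ℝ} (hab : a ≤ b)
    (hf : ContinuousOn f (Icc a b)) (hg : LeftInvOn g f (Icc a b)) :
    MapsTo g (Icc (f a) (f b)) (Icc a b) ∧ RightInvOn g f (Icc (f a) (f b)) := by
  refine ⟨fun y hy => ?_, fun y hy => ?_⟩ <;>
  · obtain ⟨x, hx, rfl⟩ := intermediate_value_Icc hab hf hy
    simp [hg hx, hx]

theorem ContinuousOn.monotoneOn_of_leftInvOn {f g : ℝ → ℝ} {a b : ℝ} (hab : a ≤ b)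
    (hf : ContinuousOn f (Icc a b)) (hf_mono : StrictMonoOn f (Icc a b))
    (hg : LeftInvOn g f (Icc a b)) : MonotoneOn g (Icc (f a) (f b)) := by
  obtain ⟨hmaps, hright⟩ := hf.mapsTo_rightInvOn_of_leftInvOn hab hg
  intro y hy y' hy' hyy'
  rwa [← hf_mono.le_iff_le (hmaps hy) (hmaps hy'), hright hy, hright hy']

theorem integrableOn_one_div_of_abs_deriv_le {u u' g : ℝ → ℝ} {a b c : ℝ} (hab : a ≤ b)
    (hu : ContinuousOn u (Icc a b)) (hu_mono : StrictMonoOn u (Icc a b))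
    (hu' : ∀ x ∈ Ioo a b, HasDerivAt u (u' x) x) (hu'c : ContinuousOn u' (Ioo a b))
    (hg : MonotoneOn g (Ioo (u a) (u b))) (hg0 : ∀ s ∈ Ioo (u a) (u b), 0 < g s)
    (hle : ∀ x ∈ Ioo a b, |u' x| ≤ c * g (u x)) :
    IntegrableOn (fun s => 1 / g s) (Ioo (u a) (u b)) := by
  have himage := hu.image_Ioo_of_strictMonoOn hab hu_mono
  have hmaps : MapsTo u (Ioo a b) (Ioo (u a) (u b)) := himage ▸ mapsTo_image u _
  rw [← himage, integrableOn_image_iff_integrableOn_abs_deriv_smul measurableSet_Ioo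
    (fun x hx => (hu' x hx).hasDerivWithinAt) (hu_mono.injOn.mono Ioo_subset_Icc_self)]
  refine ⟨?_, HasFiniteIntegral.restrict_of_bounded (C := c) measure_Ioo_lt_top ?_⟩
  · have hgu : AEMeasurable (fun x => g (u x)) (volume.restrict (Ioo a b)) :=
      aemeasurable_restrict_of_monotoneOn measurableSet_Ioo
        (hg.comp (hu_mono.monotoneOn.mono Ioo_subset_Icc_self) hmaps)
    exact ((hu'c.aemeasurable measurableSet_Ioo).abs.smul
      (hgu.const_div 1)).aestronglyMeasurable
  · filter_upwards [ae_restrict_mem measurableSet_Ioo] with x hx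
    have hgx := hg0 _ (hmaps hx)
    rw [smul_eq_mul, norm_mul, norm_div, norm_one, Real.norm_of_nonneg hgx.le, Real.norm_eq_abs,
      abs_abs, ← div_eq_mul_one_div, div_le_iff₀ hgx]
    exact hle x hx

theorem exists_last_zero {w : ℝ → ℝ} {T : ℝ} (hT : 0 ≤ T)
    (hwc : ContinuousOn w (Icc 0 T)) (hw0 : w 0 = 0) (hwT : w T ≠ 0) :
    ∃ t₀ ∈ Ico 0 T, w t₀ = 0 ∧ ∀ t ∈ Ioc t₀ T, w t ≠ 0 := by
  have hS : IsCompact (Icc 0 T ∩ w ⁻¹' {0}) := isCompact_Icc.of_isClosed_subset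
    (hwc.preimage_isClosed_of_isClosed isClosed_Icc isClosed_singleton) inter_subset_left
  obtain ⟨t₀, ⟨ht₀, hwt₀⟩, hmax⟩ := hS.exists_isGreatest ⟨0, ⟨left_mem_Icc.2 hT, hw0⟩⟩
  refine ⟨t₀, ⟨ht₀.1, ht₀.2.lt_of_ne ?_⟩, hwt₀, fun t ht hwt => ?_⟩
  · rintro rfl
    exact hwT hwt₀
  · exact ht.1.not_ge (hmax ⟨⟨ht₀.1.trans ht.1.le, ht.2⟩, hwt⟩)

theorem pos_of_hasDerivAt_mul_comp_pos {p φ v D : ℝ → ℝ} {a b : ℝ}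
    (hc : ContinuousOn (fun s => p s * φ (v s)) (Icc a b))
    (hd : ∀ t ∈ Ioo a b, HasDerivAt (fun s => p s * φ (v s)) (D t) t)
    (hD : ∀ t ∈ Ioo a b, 0 < D t) (hφ0 : φ 0 = 0) (hva : v a = 0)
    (hv : ∀ t ∈ Icc a b, 0 ≤ v t) : ∀ t ∈ Ioc a b, 0 < v t := by
  intro t ht
  refine (hv t (Ioc_subset_Icc_self ht)).lt_of_ne fun hvt => ?_
  have := strictMonoOn_Icc_of_hasDerivAt_pos hc hd hD (left_mem_Icc.2 (ht.1.le.trans ht.2))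
    (Ioc_subset_Icc_self ht) ht.1
  simp [hva, ← hvt, hφ0] at this

theorem exists_last_zero_of_ode {φ l f p a w w' : ℝ → ℝ} {T : ℝ} (hT : 0 < T)
    (hφc : ContinuousOn φ (Ici 0)) (hφ0 : φ 0 = 0) (hlpos : ∀ t ∈ Ici (0:ℝ), 0 < l t)
    (hfpos : ∀ t : ℝ, 0 < t → 0 < f t) (hpc : ContinuousOn p (Icc 0 T))
    (hppos : ∀ t ∈ Icc 0 T, 0 < p t) (hapos : ∀ t ∈ Icc 0 T, 0 < a t)
    (hwd : ∀ t ∈ Icc 0 T, HasDerivWithinAt w (w' t) (Icc 0 T) t)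
    (hw'c : ContinuousOn w' (Icc 0 T)) (hwnn : ∀ t ∈ Icc 0 T, 0 ≤ w t)
    (hw'nn : ∀ t ∈ Icc 0 T, 0 ≤ w' t) (hw00 : w 0 = 0) (hw'0 : w' 0 = 0) (hwT : w T ≠ 0)
    (hODE : ∀ t ∈ Ioo 0 T,
      HasDerivAt (fun s => p s * φ (w' s)) (p t * a t * f (w t) * l |w' t|) t) :
    ∃ t₀ ∈ Ico 0 T, w t₀ = 0 ∧ w' t₀ = 0 ∧ ∀ t ∈ Ioo t₀ T, 0 < w t ∧ 0 < w' t := by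
  obtain ⟨t₀, ht₀, hwt₀, hw_ne⟩ :=
    exists_last_zero hT.le (fun t ht => (hwd t ht).continuousWithinAt) hw00 hwT
  have hsub : Icc t₀ T ⊆ Icc 0 T := Icc_subset_Icc_left ht₀.1
  have hwpos : ∀ t ∈ Ioo t₀ T, 0 < w t := fun t ht =>
    (hwnn t (hsub (Ioo_subset_Icc_self ht))).lt_of_ne (hw_ne t (Ioo_subset_Ioc_self ht)).symm
  -- if `0 < t₀`, then `t₀` is an interior minimum of `w ≥ 0`
  have hw't₀ : w' t₀ = 0 := by
    rcases ht₀.1.eq_or_lt with h | h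
    · rwa [← h]
    · refine IsLocalMin.hasDerivAt_eq_zero ?_
        ((hwd t₀ (hsub (left_mem_Icc.2 ht₀.2.le))).hasDerivAt (Icc_mem_nhds h ht₀.2))
      filter_upwards [Icc_mem_nhds h ht₀.2] with t ht
      rw [hwt₀]
      exact hwnn t ht
  refine ⟨t₀, ht₀, hwt₀, hw't₀, fun t ht => ⟨hwpos t ht, ?_⟩⟩
  refine pos_of_hasDerivAt_mul_comp_pos (φ := φ) (v := w')
    ((hpc.mono hsub).mul (hφc.comp (hw'c.mono hsub) fun t ht => hw'nn t (hsub ht)))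
    (fun t ht => hODE t (Ioo_subset_Ioo_left ht₀.1 ht)) (fun t ht => ?_) hφ0 hw't₀
    (fun t ht => hw'nn t (hsub ht)) t (Ioo_subset_Ioc_self ht)
  have ht' := hsub (Ioo_subset_Icc_self ht)
  exact mul_pos (mul_pos (mul_pos (hppos t ht') (hapos t ht')) (hfpos _ (hwpos t ht)))
    (hlpos _ (mem_Ici.2 (abs_nonneg _)))

theorem K_deriv_le_mul_F_of_ode {φ φ' l K F f p p' a w w' : ℝ → ℝ} {t₀ T A : ℝ}
    (hφ : ∀ y, 0 < y → HasStrictDerivAt φ (φ' y) y) (hφ' : ∀ y, 0 < y → 0 < φ' y)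
    (hφpos : ∀ y, 0 < y → 0 < φ y) (hl : ∀ y, 0 < y → 0 < l y)
    (hK : ∀ y, 0 < y → HasDerivAt K (y * φ' y / l y) y) (hKc : ContinuousOn K (Ici 0))
    (hK0 : K 0 = 0) (hF : ∀ y, HasDerivAt F (f y) y) (hF0 : F 0 = 0)
    (hp : ∀ t ∈ Ioo t₀ T, HasDerivAt p (p' t) t) (hppos : ∀ t ∈ Ioo t₀ T, 0 < p t)
    (hp' : ∀ t ∈ Ioo t₀ T, 0 ≤ p' t) (ha : ∀ t ∈ Ioo t₀ T, a t * f (w t) ≤ A * f (w t))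
    (hw : ∀ t ∈ Ioo t₀ T, HasDerivAt w (w' t) t) (hwc : ContinuousOn w (Icc t₀ T))
    (hw'c : ContinuousOn w' (Icc t₀ T)) (hw'nn : ∀ t ∈ Icc t₀ T, 0 ≤ w' t)
    (hw'pos : ∀ t ∈ Ioo t₀ T, 0 < w' t) (hwt₀ : w t₀ = 0) (hw't₀ : w' t₀ = 0)
    (hode : ∀ t ∈ Ioo t₀ T,
      HasDerivAt (fun s => p s * φ (w' s)) (p t * a t * f (w t) * l (w' t)) t) :
    ∀ t ∈ Icc t₀ T, K (w' t) ≤ A * F (w t) := by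
  have hFc : Continuous F := continuous_iff_continuousAt.2 fun y => (hF y).continuousAt
  refine le_of_exists_hasDerivAt_le (V' := fun t => A * (f (w t) * w' t))
    (hKc.comp hw'c hw'nn) (continuousOn_const.mul (hFc.comp_continuousOn hwc))
    (fun x hx => ?_) (fun x hx => ((hF _).comp x (hw x hx)).const_mul A)
    (by simp [hwt₀, hw't₀, hK0, hF0])
  have hx' := hw'pos x hx
  obtain ⟨d, hd, hKd⟩ := exists_hasDerivAt_comp_le_of_hasDerivAt_mul (β := a x * f (w x))
    (hφ _ hx') (hφ' _ hx') (hφpos _ hx').le (hK _ hx') (hl _ hx')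
    (hw'c.continuousAt (Icc_mem_nhds hx.1 hx.2)) hx'.le (hp x hx) (hppos x hx) (hp' x hx)
    (by convert hode x hx using 1; ring)
  refine ⟨d, hd.trans ?_, hKd⟩
  rw [← mul_assoc]
  exact mul_le_mul_of_nonneg_right (ha x hx) hx'.le

theorem exists_integrableOn_one_div_Kinv_comp {f F K Kinv w w' : ℝ → ℝ} {t₀ T η₀ θ A : ℝ}
    (hη₀ : 0 < η₀) (hθ : 0 < θ) (hθF : ∀ s ∈ Ioo 0 η₀, A * F (θ * s) ≤ F s)
    (hF : ∀ y, HasDerivAt F (f y) y) (hF0 : F 0 = 0) (hf : ∀ y, 0 < y → 0 < f y)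
    (hKc : ContinuousOn K (Ici 0)) (hKmono : StrictMonoOn K (Ici 0)) (hK0 : K 0 = 0)
    (hKinv : ∀ t, 0 ≤ t → Kinv (K t) = t) (ht₀ : t₀ < T) (hwc : ContinuousOn w (Icc t₀ T))
    (hw : ∀ t ∈ Ioo t₀ T, HasDerivAt w (w' t) t) (hw'c : ContinuousOn w' (Ioo t₀ T))
    (hw'pos : ∀ t ∈ Ioo t₀ T, 0 < w' t) (hwt₀ : w t₀ = 0)
    (hkey : ∀ t ∈ Ioo t₀ T, K (w' t) ≤ A * F (w t)) :
    ∃ ε ∈ Ioo 0 η₀, IntegrableOn (fun s => 1 / Kinv (F s)) (Ioo 0 ε) := by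
  set u : ℝ → ℝ := fun t => w t / θ
  have hut₀ : u t₀ = 0 := by simp [u, hwt₀]
  have hFc : Continuous F := continuous_iff_continuousAt.2 fun y => (hF y).continuousAt
  have hFmono : StrictMonoOn F (Ici 0) := by
    refine strictMonoOn_of_hasDerivWithinAt_pos (f' := f) (convex_Ici 0) hFc.continuousOn
      (fun y _ => (hF y).hasDerivWithinAt) fun y hy => ?_
    rw [interior_Ici] at hy
    exact hf y hy
  have hK1 : K 0 < K 1 := hKmono self_mem_Ici (mem_Ici.2 zero_le_one) zero_lt_one
  have hu : Tendsto u (𝓝[>] t₀) (𝓝 0) := hut₀ ▸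
    ((hwc t₀ (left_mem_Icc.2 ht₀.le)).mono_of_mem_nhdsWithin (Icc_mem_nhdsGT ht₀)).div_const θ
  -- `Kinv` is only pinned down on `K '' [0, ∞)`, hence `F (u T₁) < K 1`
  obtain ⟨T₁, ⟨hFT₁, hT₁η⟩, hT₁⟩ : ∃ T₁, (F (u T₁) < K 1 ∧ u T₁ < η₀) ∧ T₁ ∈ Ioo t₀ T :=
    ((((hFc.tendsto 0).comp hu).eventually (gt_mem_nhds (by rwa [hF0, ← hK0]))).and
      (hu.eventually (gt_mem_nhds hη₀))).and (Ioo_mem_nhdsGT ht₀) |>.exists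
  have hsub : Ioo t₀ T₁ ⊆ Ioo t₀ T := Ioo_subset_Ioo_right hT₁.2.le
  have hu' : ∀ x ∈ Ioo t₀ T₁, HasDerivAt u (w' x / θ) x := fun x hx =>
    (hw x (hsub hx)).div_const θ
  have huc : ContinuousOn u (Icc t₀ T₁) :=
    (hwc.mono (Icc_subset_Icc_right hT₁.2.le)).div_const θ
  have husm : StrictMonoOn u (Icc t₀ T₁) := strictMonoOn_Icc_of_hasDerivAt_pos huc hu'
    fun x hx => div_pos (hw'pos x (hsub hx)) hθ
  have hε : 0 < u T₁ :=
    hut₀ ▸ husm (left_mem_Icc.2 hT₁.1.le) (right_mem_Icc.2 hT₁.1.le) hT₁.1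
  have hKinv' : LeftInvOn Kinv K (Icc 0 1) := fun t ht => hKinv t ht.1
  have hKc' : ContinuousOn K (Icc 0 1) := hKc.mono Icc_subset_Ici_self
  obtain ⟨hmaps, hright⟩ := hKc'.mapsTo_rightInvOn_of_leftInvOn zero_le_one hKinv'
  have hFmaps : MapsTo F (Ioo 0 (u T₁)) (Icc (K 0) (K 1)) := fun s hs =>
    ⟨by rw [hK0, ← hF0]; exact (hFmono self_mem_Ici hs.1.le hs.1).le,
      ((hFmono.monotoneOn hs.1.le hε.le hs.2.le).trans hFT₁.le)⟩
  have hpos : ∀ s ∈ Ioo 0 (u T₁), 0 < Kinv (F s) := fun s hs =>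
    (hmaps (hFmaps hs)).1.lt_of_ne fun h => (hFmono self_mem_Ici hs.1.le hs.1).ne <| by
      rw [← hright (hFmaps hs), ← h, hK0, hF0]
  have hle : ∀ x ∈ Ioo t₀ T₁, w' x ≤ Kinv (F (u x)) := fun x hx => by
    have hux : u x ∈ Ioo 0 (u T₁) := hut₀ ▸ (husm.image_Ioo_subset ⟨x, hx, rfl⟩)
    refine (hKmono.le_iff_le (hw'pos x (hsub hx)).le (hmaps (hFmaps hux)).1).1 ?_
    calc K (w' x) ≤ A * F (θ * u x) := by
          simpa [u, mul_div_cancel₀ _ hθ.ne'] using hkey x (hsub hx)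
      _ ≤ F (u x) := hθF _ ⟨hux.1, hux.2.trans hT₁η⟩
      _ = K (Kinv (F (u x))) := (hright (hFmaps hux)).symm
  refine ⟨u T₁, ⟨hε, hT₁η⟩, hut₀ ▸ integrableOn_one_div_of_abs_deriv_le (c := θ⁻¹) hT₁.1.le
    huc husm hu' ((hw'c.mono hsub).div_const θ) ?_ (hut₀ ▸ hpos) fun x hx => ?_⟩
  · exact hut₀ ▸ ((hKc'.monotoneOn_of_leftInvOn zero_le_one (hKmono.mono Icc_subset_Ici_self)
      hKinv').comp (hFmono.monotoneOn.mono fun s hs => hs.1.le) hFmaps)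
  · rw [abs_of_pos (div_pos (hw'pos x (hsub hx)) hθ), div_eq_inv_mul]
    exact mul_le_mul_of_nonneg_left (hle x hx) (inv_nonneg.2 hθ.le)

theorem stmt_8_general
    (φ φ' l : ℝ → ℝ)
    (hφc : ContinuousOn φ (Ici 0)) (hφ0 : φ 0 = 0)
    (hφpos : ∀ t : ℝ, 0 < t → 0 < φ t)
    (hφd : ∀ t : ℝ, 0 < t → HasDerivAt φ (φ' t) t)
    (hφ'c : ContinuousOn φ' (Ioi 0))
    (hφ'pos : ∀ t : ℝ, 0 < t → 0 < φ' t)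
    (hlc : ContinuousOn l (Ici 0)) (hlpos : ∀ t ∈ Ici (0:ℝ), 0 < l t)
    (hint : IntegrableOn (fun s => s * φ' s / l s) (Ioo 0 1))
    (C η₀ : ℝ) (hC : 1 ≤ C) (hη₀ : 0 < η₀)
    (f : ℝ → ℝ) (hfc : Continuous f)
    (hfpos : ∀ t : ℝ, 0 < t → 0 < f t)
    (hfCinc : CIncreasingOn C f (Ioo 0 η₀))
    (T : ℝ) (hT : 0 < T)
    (p p' : ℝ → ℝ)
    (hpd : ∀ t ∈ Icc (0:ℝ) T, HasDerivWithinAt p (p' t) (Icc 0 T) t)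
    (hppos : ∀ t ∈ Icc (0:ℝ) T, 0 < p t)
    (hp'nn : ∀ t ∈ Ioo (0:ℝ) T, 0 ≤ p' t)
    (a : ℝ → ℝ) (hac : ContinuousOn a (Icc (0:ℝ) T))
    (hapos : ∀ t ∈ Icc (0:ℝ) T, 0 < a t)
    (η : ℝ) (hη : η ∈ Ioo (0:ℝ) η₀)
    (w w' : ℝ → ℝ)
    (hwd : ∀ t ∈ Icc (0:ℝ) T, HasDerivWithinAt w (w' t) (Icc 0 T) t)
    (hw'c : ContinuousOn w' (Icc (0:ℝ) T))
    (hw'0 : w' 0 = 0) (hwT : w T = η)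
    (hwrange : ∀ t ∈ Icc (0:ℝ) T, 0 ≤ w t ∧ w t ≤ η ∧ 0 ≤ w' t)
    (hODE : ∀ t ∈ Ioo (0:ℝ) T,
      HasDerivAt (fun s => p s * φ (w' s)) (p t * a t * f (w t) * l |w' t|) t)
    (F K Kinv : ℝ → ℝ)
    (hF : ∀ t, F t = ∫ s in (0:ℝ)..t, f s)
    (hK : ∀ t, K t = ∫ s in (0:ℝ)..t, s * φ' s / l s)
    (hKinv : ∀ t : ℝ, 0 ≤ t → Kinv (K t) = t)
    (hw00 : w 0 = 0) :
    ∃ ε ∈ Ioo (0:ℝ) η₀, IntegrableOn (fun s => 1 / Kinv (F s)) (Ioo 0 ε) := by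
  have hgc : ContinuousOn (fun s => s * φ' s / l s) (Ioi 0) :=
    (continuousOn_id.mul hφ'c).div (hlc.mono Ioi_subset_Ici_self) fun s hs =>
      (hlpos s (mem_Ici.2 (le_of_lt hs))).ne'
  have hK0 : K 0 = 0 := by simp [hK]
  have hF0 : F 0 = 0 := by simp [hF]
  have hFd : ∀ y, HasDerivAt F (f y) y := fun y =>
    funext hF ▸ (hfc.integral_hasStrictDerivAt 0 y).hasDerivAt
  have hwc : ContinuousOn w (Icc 0 T) := fun t ht => (hwd t ht).continuousWithinAt
  obtain ⟨t₀, ht₀, hwt₀, hw't₀, hpos⟩ := exists_last_zero_of_ode hT hφc hφ0 hlpos hfpos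
    (fun t ht => (hpd t ht).continuousWithinAt) hppos hapos hwd hw'c
    (fun t ht => (hwrange t ht).1) (fun t ht => (hwrange t ht).2.2) hw00 hw'0 (hwT ▸ hη.1.ne')
    hODE
  have hsub : Icc t₀ T ⊆ Icc 0 T := Icc_subset_Icc_left ht₀.1
  have hsub' : Ioo t₀ T ⊆ Icc 0 T := Ioo_subset_Icc_self.trans hsub
  have hinterior : ∀ {g g' : ℝ → ℝ}, (∀ t ∈ Icc 0 T, HasDerivWithinAt g (g' t) (Icc 0 T) t) →
      ∀ t ∈ Ioo t₀ T, HasDerivAt g (g' t) t := fun hg t ht =>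
    (hg t (hsub' ht)).hasDerivAt (Icc_mem_nhds (ht₀.1.trans_lt ht.1) ht.2)
  obtain ⟨A, hA⟩ := isCompact_Icc.bddAbove_image hac
  have hkey := K_deriv_le_mul_F_of_ode (A := A)
    (fun y hy => hasStrictDerivAt_of_hasDerivAt_of_continuousAt
      (eventually_of_mem (Ioi_mem_nhds hy) hφd) (hφ'c.continuousAt (Ioi_mem_nhds hy)))
    hφ'pos hφpos (fun y hy => hlpos y hy.le) (fun y hy => hasDerivAt_of_integral hK hint hgc hy)
    (continuousOn_Ici_of_integral hK hint hgc) hK0 hFd hF0 (hinterior hpd)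
    (fun t ht => hppos t (hsub' ht)) (fun t ht => hp'nn t ⟨ht₀.1.trans_lt ht.1, ht.2⟩)
    (fun t ht => mul_le_mul_of_nonneg_right (hA (mem_image_of_mem a (hsub' ht)))
      (hfpos _ (hpos t ht).1).le)
    (hinterior hwd) (hwc.mono hsub) (hw'c.mono hsub) (fun t ht => (hwrange t (hsub ht)).2.2)
    (fun t ht => (hpos t ht).2) hwt₀ hw't₀
    (fun t ht => by simpa [abs_of_pos (hpos t ht).2] using hODE t ⟨ht₀.1.trans_lt ht.1, ht.2⟩)
  obtain ⟨θ, hθ, hθF⟩ :=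
    hfCinc.exists_mul_integral_le (by linarith) hfc (fun x hx => (hfpos x hx.1).le) A
  exact exists_integrableOn_one_div_Kinv_comp hη₀ hθ
    (fun s hs => by simpa only [hF] using hθF s hs) hFd hF0 hfpos
    (continuousOn_Ici_of_integral hK hint hgc)
    (strictMonoOn_Ici_of_integral hK hint hgc fun y hy =>
      div_pos (mul_pos hy (hφ'pos y hy)) (hlpos y hy.le))
    hK0 hKinv ht₀.2 (hwc.mono hsub) (hinterior hwd) (hw'c.mono hsub')
    (fun t ht => (hpos t ht).2) hwt₀ fun t ht => hkey t (Ioo_subset_Icc_self ht)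

/-- Proposition 3.11: if a solution of the mixed problem
`[℘ φ(w')]' = ℘ a f(w) l(|w'|)`, `w'(0)=0`, `w(T)=η`, with `℘' ≥ 0`, satisfies
`w(0) = 0`, then the Keller–Osserman condition (KO₀) holds. -/
theorem stmt_8
    (φ φ' l : ℝ → ℝ)
    (hφc : ContinuousOn φ (Ici 0)) (hφ0 : φ 0 = 0)
    (hφpos : ∀ t : ℝ, 0 < t → 0 < φ t)
    (hφd : ∀ t : ℝ, 0 < t → HasDerivAt φ (φ' t) t)
    (hφ'c : ContinuousOn φ' (Ioi 0))
    (hφ'pos : ∀ t : ℝ, 0 < t → 0 < φ' t)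
    (hlc : ContinuousOn l (Ici 0)) (hlpos : ∀ t ∈ Ici (0:ℝ), 0 < l t)
    (hint : IntegrableOn (fun s => s * φ' s / l s) (Ioo 0 1))
    (C η₀ : ℝ) (hC : 1 ≤ C) (hη₀ : 0 < η₀)
    (f : ℝ → ℝ) (hfc : Continuous f) (hf0 : f 0 = 0)
    (hfpos : ∀ t : ℝ, 0 < t → 0 < f t)
    (hfCinc : CIncreasingOn C f (Ioo 0 η₀))
    (T : ℝ) (hT : 0 < T)
    (p p' : ℝ → ℝ)
    (hpd : ∀ t ∈ Icc (0:ℝ) T, HasDerivWithinAt p (p' t) (Icc 0 T) t)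
    (hp'c : ContinuousOn p' (Icc (0:ℝ) T))
    (hppos : ∀ t ∈ Icc (0:ℝ) T, 0 < p t)
    (hp'nn : ∀ t ∈ Ioo (0:ℝ) T, 0 ≤ p' t)
    (a : ℝ → ℝ) (hac : ContinuousOn a (Icc (0:ℝ) T))
    (hapos : ∀ t ∈ Icc (0:ℝ) T, 0 < a t)
    (η : ℝ) (hη : η ∈ Ioo (0:ℝ) η₀)
    (w w' : ℝ → ℝ)
    (hwd : ∀ t ∈ Icc (0:ℝ) T, HasDerivWithinAt w (w' t) (Icc 0 T) t)
    (hw'c : ContinuousOn w' (Icc (0:ℝ) T))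
    (hw'0 : w' 0 = 0) (hwT : w T = η)
    (hwrange : ∀ t ∈ Icc (0:ℝ) T, 0 ≤ w t ∧ w t ≤ η ∧ 0 ≤ w' t)
    (hODE : ∀ t ∈ Ioo (0:ℝ) T,
      HasDerivAt (fun s => p s * φ (w' s)) (p t * a t * f (w t) * l |w' t|) t)
    (F K Kinv : ℝ → ℝ)
    (hF : ∀ t, F t = ∫ s in (0:ℝ)..t, f s)
    (hK : ∀ t, K t = ∫ s in (0:ℝ)..t, s * φ' s / l s)
    (hKinv : ∀ t : ℝ, 0 ≤ t → Kinv (K t) = t)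
    (hw00 : w 0 = 0) :
    ∃ ε ∈ Ioo (0:ℝ) η₀, IntegrableOn (fun s => 1 / Kinv (F s)) (Ioo 0 ε) :=
  stmt_8_general φ φ' l hφc hφ0 hφpos hφd hφ'c hφ'pos hlc hlpos hint C η₀ hC hη₀ f hfc hfpos hfCinc
    T hT p p' hpd hppos hp'nn a hac hapos η hη w w' hwd hw'c hw'0 hwT hwrange hODE F K Kinv hF hK
    hKinv hw00
end

section
/- Assume: φ ∈ C([0,∞)) ∩ C¹((0,∞)) with φ(0) = 0 and φ' > 0 on (0,∞); l ∈ C([0,∞)) with l > 0 on [0,∞); s ↦ s·φ'(s)/l(s) is integrable on (0,1) but not on (1,∞), so that K(t) = ∫₀^t s·φ'(s)/l(s) ds is an increasing bijection of [0,∞) onto itself; f ∈ C(ℝ) with f(0) = 0, f > 0 on (0,∞), and f C-increasing on (η̄₀,∞) for some η̄₀ ≥ 0 and C ≥ 1; ℘ ∈ C¹([0,∞)) with ℘ > 0 and ℘' ≥ 0 on (0,∞); a ∈ C([0,∞)) with a > 0. Let R < ∞ and let w ∈ C¹([0,R)) satisfy: w'(0) = 0, w ≥ 0, w' ≥ 0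 on [0,R), t ↦ ℘(t)·φ(w'(t)) differentiable on (0,R) with derivative ℘(t)·a(t)·f(w(t))·l(|w'(t)|), and w(t) → ∞ as t → R⁻. Then the Keller–Osserman condition (KO_∞) holds: ∫_T^∞ ds/K⁻¹(F(s)) < ∞ for some T > η̄₀, where F(t) = ∫_{η̄₀}^t f(s) ds. -/
open Set MeasureTheory Filter Topology

section Primitive

variable {J K : ℝ → ℝ}

lemma intervalIntegrable_zero_of_integrableOn_Ioo (hJc : ContinuousOn J (Ioi 0))
    (h0 : IntegrableOn J (Ioo 0 1)) {x : ℝ} (hx : 0 ≤ x) : IntervalIntegrable J volume 0 x := by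
  have h01 : IntervalIntegrable J volume 0 1 :=
    (intervalIntegrable_iff_integrableOn_Ioo_of_le zero_le_one).2 h0
  rcases le_total x 1 with hx1 | hx1
  · exact h01.mono_set (uIcc_subset_uIcc_left (by simp [uIcc_of_le, hx, hx1]))
  · refine h01.trans (hJc.mono fun s hs => ?_).intervalIntegrable
    rw [uIcc_of_le hx1] at hs
    exact zero_lt_one.trans_le hs.1

lemma hasDerivAt_of_eq_integral_zero (hJc : ContinuousOn J (Ioi 0))
    (h0 : IntegrableOn J (Ioo 0 1)) (hK : ∀ t, K t = ∫ s in (0:ℝ)..t, J s) {x : ℝ}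
    (hx : 0 < x) : HasDerivAt K (J x) x := by
  rw [funext hK]
  exact intervalIntegral.integral_hasDerivAt_right
    (intervalIntegrable_zero_of_integrableOn_Ioo hJc h0 hx.le)
    (hJc.stronglyMeasurableAtFilter isOpen_Ioi x hx) (hJc.continuousAt (Ioi_mem_nhds hx))

lemma continuousOn_of_eq_integral_zero (hJc : ContinuousOn J (Ioi 0))
    (h0 : IntegrableOn J (Ioo 0 1)) (hK : ∀ t, K t = ∫ s in (0:ℝ)..t, J s) :
    ContinuousOn K (Ici 0) := by
  intro x hx
  have hint :=
    intervalIntegrable_zero_of_integrableOn_Ioo hJc h0 (x := x + 1) (by linarith [hx.out])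
  have hKc : ContinuousOn K (uIcc 0 (x + 1)) := by
    rw [funext hK]
    exact intervalIntegral.continuousOn_primitive_interval' hint left_mem_uIcc
  rw [uIcc_of_le (by linarith [hx.out])] at hKc
  refine (hKc x ⟨hx, by linarith⟩).mono_of_mem_nhdsWithin ?_
  simpa only [Ici_inter_Iic] using inter_mem_nhdsWithin (Ici 0) (Iic_mem_nhds (lt_add_one x))

lemma strictMonoOn_of_eq_integral_zero (hJc : ContinuousOn J (Ioi 0))
    (hJpos : ∀ s > 0, 0 < J s) (h0 : IntegrableOn J (Ioo 0 1))
    (hK : ∀ t, K t = ∫ s in (0:ℝ)..t, J s) : StrictMonoOn K (Ici 0) := by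
  refine strictMonoOn_of_deriv_pos (convex_Ici 0) (continuousOn_of_eq_integral_zero hJc h0 hK)
    fun x hx => ?_
  rw [interior_Ici] at hx
  rw [(hasDerivAt_of_eq_integral_zero hJc h0 hK hx).deriv]
  exact hJpos x hx

lemma surjOn_of_eq_integral_zero (hJc : ContinuousOn J (Ioi 0))
    (hJpos : ∀ s > 0, 0 < J s) (h0 : IntegrableOn J (Ioo 0 1))
    (hinf : ¬ IntegrableOn J (Ioi 1)) (hK : ∀ t, K t = ∫ s in (0:ℝ)..t, J s) :
    SurjOn K (Ici 0) (Ici 0) := by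
  intro y hy
  obtain ⟨x, hx, hyx⟩ : ∃ x ≥ 0, y ≤ K x := by
    by_contra! hbdd
    refine hinf (integrableOn_Ioi_of_intervalIntegral_norm_bounded (y - K 1) 1
      (fun i => (hJc.mono fun s hs => zero_lt_one.trans_le hs.1).integrableOn_Icc.mono_set
        Ioc_subset_Icc_self) tendsto_id ?_)
    filter_upwards [eventually_ge_atTop 1] with i hi
    have hnorm : ∫ s in (1:ℝ)..i, ‖J s‖ = K i - K 1 := by
      rw [hK, hK, intervalIntegral.integral_interval_sub_left
        (intervalIntegrable_zero_of_integrableOn_Ioo hJc h0 (by linarith))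
        (intervalIntegrable_zero_of_integrableOn_Ioo hJc h0 zero_le_one)]
      refine intervalIntegral.integral_congr fun s hs => ?_
      rw [uIcc_of_le hi] at hs
      exact Real.norm_of_nonneg (hJpos s (zero_lt_one.trans_le hs.1)).le
    have := hbdd i (by linarith)
    simp only [id]
    linarith
  have hK0 : K 0 = 0 := by simp [hK]
  obtain ⟨z, hz, rfl⟩ := intermediate_value_Icc hx
    ((continuousOn_of_eq_integral_zero hJc h0 hK).mono Icc_subset_Ici_self)
    (show y ∈ Icc (K 0) (K x) by rw [hK0]; exact ⟨hy, hyx⟩)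
  exact ⟨z, hz.1, rfl⟩

end Primitive

section LeftInverse

variable {α β : Type*} [LinearOrder α] [Preorder β] {f : α → β} {g : β → α} {s : Set α}
  {t : Set β}

lemma StrictMonoOn.le_iff_le_of_leftInvOn (hf : StrictMonoOn f s) (hsurj : SurjOn f s t)
    (hg : LeftInvOn g f s) {x : α} {y : β} (hx : x ∈ s) (hy : y ∈ t) : f x ≤ y ↔ x ≤ g y := by
  obtain ⟨z, hz, rfl⟩ := hsurj hy
  rw [hg hz]
  exact hf.le_iff_le hx hz

lemma StrictMonoOn.strictMonoOn_of_leftInvOn (hf : StrictMonoOn f s) (hsurj : SurjOn f s t)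
    (hg : LeftInvOn g f s) : StrictMonoOn g t := by
  intro y hy y' hy' hyy'
  obtain ⟨z, hz, rfl⟩ := hsurj hy
  obtain ⟨z', hz', rfl⟩ := hsurj hy'
  rw [hg hz, hg hz']
  exact (hf.lt_iff_lt hz hz').1 hyy'

end LeftInverse

section RealLeftInverse

variable {K Kinv : ℝ → ℝ}

lemma pos_of_leftInvOn (hK0 : K 0 = 0) (hsurj : SurjOn K (Ici 0) (Ici 0))
    (hinv : LeftInvOn Kinv K (Ici 0)) {y : ℝ} (hy : 0 < y) : 0 < Kinv y := by
  obtain ⟨z, hz, rfl⟩ := hsurj (mem_Ici.2 hy.le)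
  rw [hinv hz]
  exact hz.out.lt_of_ne (by rintro rfl; exact hy.ne' hK0)

lemma continuousOn_Ioi_of_leftInvOn (hK : StrictMonoOn K (Ici 0)) (hK0 : K 0 = 0)
    (hsurj : SurjOn K (Ici 0) (Ici 0)) (hinv : LeftInvOn Kinv K (Ici 0)) :
    ContinuousOn Kinv (Ioi 0) := by
  have himage : Ioi 0 ⊆ Kinv '' Ioi 0 := fun x hx =>
    ⟨K x, hK0 ▸ hK self_mem_Ici (mem_Ici.2 hx.out.le) hx, hinv (mem_Ici.2 hx.out.le)⟩
  refine fun y hy => (StrictMonoOn.continuousAt_of_image_mem_nhds ?_ (Ioi_mem_nhds hy)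
    (mem_of_superset (Ioi_mem_nhds (pos_of_leftInvOn hK0 hsurj hinv hy)) himage)).continuousWithinAt
  exact (hK.strictMonoOn_of_leftInvOn hsurj hinv).mono Ioi_subset_Ici_self

end RealLeftInverse

section CIncreasing

variable {f F : ℝ → ℝ} {C η : ℝ}

lemma hasDerivAt_of_eq_integral (hfc : Continuous f) (hF : ∀ t, F t = ∫ s in η..t, f s)
    (t : ℝ) : HasDerivAt F (f t) t := by
  rw [funext hF]
  exact (hfc.integral_hasStrictDerivAt η t).hasDerivAt

lemma pos_of_eq_integral (hfc : Continuous f) (hfpos : ∀ t > η, 0 < f t)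
    (hF : ∀ t, F t = ∫ s in η..t, f s) {t : ℝ} (ht : η < t) : 0 < F t := by
  rw [hF]
  exact intervalIntegral.intervalIntegral_pos_of_pos_on (hfc.intervalIntegrable _ _)
    (fun s hs => hfpos s hs.1) ht

lemma CIncreasingOn.mul_le_of_eq_integral_two_mul (hη : 0 ≤ η) (hC : 0 < C)
    (hfc : Continuous f) (hfpos : ∀ t > η, 0 < f t) (hfC : CIncreasingOn C f (Ioi η))
    (hF : ∀ t, F t = ∫ s in η..t, f s) {t : ℝ} (ht : η < t) :
    F t * (1 + (C ^ 2)⁻¹) ≤ F (2 * t) := by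
  have hft := hfpos t ht
  have hupper : F t ≤ C * f t * t := calc
    F t ≤ ∫ _ in η..t, C * f t := by
      rw [hF]
      exact intervalIntegral.integral_mono_on_of_le_Ioo ht.le (hfc.intervalIntegrable _ _)
        intervalIntegrable_const fun s hs => hfC s hs.1 t ht hs.2.le
    _ = (t - η) * (C * f t) := by simp; ring
    _ ≤ C * f t * t := by nlinarith [mul_pos hC hft]
  have hlower : t * (f t / C) ≤ F (2 * t) - F t := calc
    t * (f t / C) = ∫ _ in t..2 * t, f t / C := by simp; ring
    _ ≤ ∫ s in t..2 * t, f s := by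
      refine intervalIntegral.integral_mono_on (by linarith) intervalIntegrable_const
        (hfc.intervalIntegrable _ _) fun s hs => (div_le_iff₀ hC).2 ?_
      linarith [hfC t ht s (ht.trans_le hs.1) hs.1]
    _ = F (2 * t) - F t := by
      rw [hF, hF, intervalIntegral.integral_interval_sub_left (hfc.intervalIntegrable _ _)
        (hfc.intervalIntegrable _ _)]
  have : F t * (C ^ 2)⁻¹ ≤ t * (f t / C) := by
    rw [← div_eq_mul_inv, div_le_iff₀ (by positivity)]
    calc F t ≤ C * f t * t := hupper
      _ = t * (f t / C) * C ^ 2 := by field_simp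
  linarith

lemma CIncreasingOn.exists_mul_le_of_eq_integral (hη : 0 ≤ η) (hC : 0 < C)
    (hfc : Continuous f) (hfpos : ∀ t > η, 0 < f t) (hfC : CIncreasingOn C f (Ioi η))
    (hF : ∀ t, F t = ∫ s in η..t, f s) (D : ℝ) : ∃ c ≥ 1, ∀ s > η, D * F s ≤ F (c * s) := by
  have hρ : 1 < 1 + (C ^ 2)⁻¹ := lt_add_of_pos_right 1 (by positivity)
  have hpow : ∀ k : ℕ, ∀ s > η, F s * (1 + (C ^ 2)⁻¹) ^ k ≤ F (2 ^ k * s) := by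
    intro k
    induction k with
    | zero => simp
    | succ k ih =>
      intro s hs
      have hks : η < 2 ^ k * s :=
        hs.trans_le (le_mul_of_one_le_left (hη.trans hs.le) (one_le_pow₀ one_le_two))
      calc F s * (1 + (C ^ 2)⁻¹) ^ (k + 1) = F s * (1 + (C ^ 2)⁻¹) ^ k * (1 + (C ^ 2)⁻¹) := by
            ring
        _ ≤ F (2 ^ k * s) * (1 + (C ^ 2)⁻¹) := by gcongr; exact ih s hs
        _ ≤ F (2 * (2 ^ k * s)) := hfC.mul_le_of_eq_integral_two_mul hη hC hfc hfpos hF hks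
        _ = F (2 ^ (k + 1) * s) := by ring_nf
  obtain ⟨k, hk⟩ := pow_unbounded_of_one_lt D hρ
  refine ⟨2 ^ k, one_le_pow₀ one_le_two, fun s hs => ?_⟩
  calc D * F s ≤ (1 + (C ^ 2)⁻¹) ^ k * F s :=
        mul_le_mul_of_nonneg_right hk.le (pos_of_eq_integral hfc hfpos hF hs).le
    _ ≤ F (2 ^ k * s) := by rw [mul_comm]; exact hpow k s hs

end CIncreasing

section BlowUp

variable {g v v' : ℝ → ℝ} {t₀ R M : ℝ}

lemma monotoneOn_of_hasDerivAt_nonneg {s : Set ℝ} (hs : Convex ℝ s)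
    (hv : ∀ t ∈ s, HasDerivAt v (v' t) t) (hv'nn : ∀ t ∈ s, 0 ≤ v' t) : MonotoneOn v s := by
  refine monotoneOn_of_deriv_nonneg hs (fun t ht => (hv t ht).continuousAt.continuousWithinAt)
    (fun t ht => (hv t (interior_subset ht)).differentiableAt.differentiableWithinAt)
    fun t ht => ?_
  rw [(hv t (interior_subset ht)).deriv]
  exact hv'nn t (interior_subset ht)

lemma integral_le_mul_sub_of_mul_deriv_le (hv : ∀ t ∈ Ico t₀ R, HasDerivAt v (v' t) t)
    (hv'c : ContinuousOn v' (Ico t₀ R)) (hv'nn : ∀ t ∈ Ico t₀ R, 0 ≤ v' t)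
    (hg : ContinuousOn g (Ici (v t₀))) (hle : ∀ t ∈ Ico t₀ R, g (v t) * v' t ≤ M)
    {t : ℝ} (ht : t ∈ Ico t₀ R) : ∫ y in v t₀..v t, g y ≤ M * (t - t₀) := by
  have hsub : Icc t₀ t ⊆ Ico t₀ R := Icc_subset_Ico_right ht.2
  have hvc : ContinuousOn v (Icc t₀ t) := fun s hs =>
    (hv s (hsub hs)).continuousAt.continuousWithinAt
  have hmaps : MapsTo v (Icc t₀ t) (Ici (v t₀)) := fun s hs =>
    monotoneOn_of_hasDerivAt_nonneg (convex_Ico _ _) hv hv'nn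
      (left_mem_Ico.2 (ht.1.trans_lt ht.2)) (hsub hs) hs.1
  rw [← intervalIntegral.integral_comp_mul_deriv' (f := v) (f' := v')
    (fun s hs => hv s (hsub (uIcc_of_le ht.1 ▸ hs)))
    (uIcc_of_le ht.1 ▸ hv'c.mono hsub) (uIcc_of_le ht.1 ▸ hg.mono hmaps.image_subset)]
  calc ∫ s in t₀..t, (g ∘ v) s * v' s ≤ ∫ _ in t₀..t, M := by
        refine intervalIntegral.integral_mono_on ht.1 ?_ intervalIntegrable_const
          fun s hs => hle s (hsub hs)
        exact ((hg.comp hvc hmaps).mul (hv'c.mono hsub)).intervalIntegrable_of_Icc ht.1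
    _ = M * (t - t₀) := by simp; ring

lemma integrableOn_Ioi_of_mul_deriv_le (ht₀ : t₀ < R)
    (hv : ∀ t ∈ Ico t₀ R, HasDerivAt v (v' t) t) (hv'c : ContinuousOn v' (Ico t₀ R))
    (hv'nn : ∀ t ∈ Ico t₀ R, 0 ≤ v' t) (hg : ContinuousOn g (Ici (v t₀)))
    (hgnn : ∀ y ≥ v t₀, 0 ≤ g y) (hle : ∀ t ∈ Ico t₀ R, g (v t) * v' t ≤ M)
    (hblow : Tendsto v (𝓝[<] R) atTop) : IntegrableOn g (Ioi (v t₀)) := by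
  have hM : 0 ≤ M := (mul_nonneg (hgnn _ le_rfl) (hv'nn t₀ ⟨le_rfl, ht₀⟩)).trans
    (hle t₀ ⟨le_rfl, ht₀⟩)
  refine integrableOn_Ioi_of_intervalIntegral_norm_bounded (M * (R - t₀)) (v t₀)
    (fun i => (hg.mono Icc_subset_Ici_self).integrableOn_Icc.mono_set Ioc_subset_Icc_self)
    tendsto_id ?_
  filter_upwards [eventually_ge_atTop (v t₀)] with V hV
  obtain ⟨t, hVt, ht⟩ : ∃ t, V ≤ v t ∧ t ∈ Ioo t₀ R :=
    ((hblow.eventually_ge_atTop V).and (Ioo_mem_nhdsLT ht₀)).exists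
  calc ∫ y in v t₀..V, ‖g y‖ = ∫ y in v t₀..V, g y :=
        intervalIntegral.integral_congr fun y hy =>
          Real.norm_of_nonneg (hgnn y (uIcc_of_le hV ▸ hy).1)
    _ ≤ ∫ y in v t₀..v t, g y := by
        refine intervalIntegral.integral_mono_interval le_rfl hV hVt
          ((ae_restrict_iff' measurableSet_Ioc).2 (.of_forall fun y hy => hgnn y hy.1.le)) ?_
        exact (hg.mono Icc_subset_Ici_self).intervalIntegrable_of_Icc (hV.trans hVt)
    _ ≤ M * (t - t₀) :=
        integral_le_mul_sub_of_mul_deriv_le hv hv'c hv'nn hg hle ⟨ht.1.le, ht.2⟩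
    _ ≤ M * (R - t₀) := by gcongr; exact ht.2.le

end BlowUp

lemma HasStrictDerivAt.hasDerivAt_of_hasDerivAt_comp {φ u : ℝ → ℝ} {φ₀ d t : ℝ}
    (hφ : HasStrictDerivAt φ φ₀ (u t)) (hφ₀ : φ₀ ≠ 0) (hu : ContinuousAt u t)
    (hφu : HasDerivAt (fun s => φ (u s)) d t) : HasDerivAt u (d / φ₀) t := by
  have hev : (fun s => hφ.localInverse φ φ₀ (u t) hφ₀ (φ (u s))) =ᶠ[𝓝 t] u :=
    hu.eventually (hφ.eventually_left_inverse hφ₀)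
  rw [div_eq_inv_mul]
  exact hev.hasDerivAt_iff.1 ((hφ.to_localInverse hφ₀).hasDerivAt.comp t hφu)

lemma HasDerivAt.of_mul_left {p v : ℝ → ℝ} {p₀ q t : ℝ} (hp : HasDerivAt p p₀ t)
    (hpv : HasDerivAt (fun s => p s * v s) q t) (hpt : p t ≠ 0) :
    HasDerivAt v ((q - p₀ * v t) / p t) t := by
  have hev : (fun s => p s * v s / p s) =ᶠ[𝓝 t] v := by
    filter_upwards [hp.continuousAt.eventually_ne hpt] with s hs using mul_div_cancel_left₀ _ hs
  refine (hev.hasDerivAt_iff.1 (hpv.div hp hpt)).congr_deriv ?_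
  field_simp

lemma exists_hasDerivAt_comp_le {φ φ' l p u K : ℝ → ℝ} {p₀ h t : ℝ}
    (hφ : HasStrictDerivAt φ (φ' (u t)) (u t)) (hφ' : 0 < φ' (u t)) (hl : 0 < l (u t))
    (hK : HasDerivAt K (u t * φ' (u t) / l (u t)) (u t)) (hu : ContinuousAt u t)
    (hut : 0 ≤ u t) (hp : HasDerivAt p p₀ t) (hpt : 0 < p t) (hp₀ : 0 ≤ p₀)
    (hφu : 0 ≤ φ (u t)) (hpφu : HasDerivAt (fun s => p s * φ (u s)) (p t * h * l (u t)) t) :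
    ∃ k, HasDerivAt (fun s => K (u s)) k t ∧ k ≤ h * u t := by
  have hv := hp.of_mul_left hpφu hpt.ne'
  have hv_le : (p t * h * l (u t) - p₀ * φ (u t)) / p t ≤ h * l (u t) := by
    rw [div_le_iff₀ hpt]
    nlinarith [mul_nonneg hp₀ hφu]
  refine ⟨_, hK.comp t (hφ.hasDerivAt_of_hasDerivAt_comp hφ'.ne' hu hv), ?_⟩
  calc u t * φ' (u t) / l (u t) * ((p t * h * l (u t) - p₀ * φ (u t)) / p t / φ' (u t))
      = u t * ((p t * h * l (u t) - p₀ * φ (u t)) / p t) / l (u t) := by field_simp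
    _ ≤ u t * (h * l (u t)) / l (u t) := by gcongr
    _ = h * u t := by field_simp

lemma pos_of_hasDerivAt_mul_comp_pos_s9 {φ p u q : ℝ → ℝ} {t₁ R : ℝ}
    (hφ : StrictMonoOn φ (Ici 0)) (hφ0 : φ 0 = 0) (hp : ∀ t ∈ Ico t₁ R, 0 < p t)
    (hu : ∀ t ∈ Ico t₁ R, 0 ≤ u t)
    (hd : ∀ t ∈ Ico t₁ R, HasDerivAt (fun s => p s * φ (u s)) (q t) t)
    (hq : ∀ t ∈ Ico t₁ R, 0 < q t) {t : ℝ} (ht : t ∈ Ioo t₁ R) : 0 < u t := by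
  have ht₁ : t₁ ∈ Ico t₁ R := ⟨le_rfl, ht.1.trans ht.2⟩
  have hP : StrictMonoOn (fun s => p s * φ (u s)) (Ico t₁ R) := by
    refine strictMonoOn_of_deriv_pos (convex_Ico t₁ R)
      (fun s hs => (hd s hs).continuousAt.continuousWithinAt) fun s hs => ?_
    rw [interior_Ico] at hs
    rw [(hd s ⟨hs.1.le, hs.2⟩).deriv]
    exact hq s ⟨hs.1.le, hs.2⟩
  have hφu₁ : 0 ≤ φ (u t₁) := hφ0 ▸ hφ.monotoneOn self_mem_Ici (hu t₁ ht₁) (hu t₁ ht₁)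
  have hPt : 0 < p t * φ (u t) :=
    (mul_nonneg (hp t₁ ht₁).le hφu₁).trans_lt (hP ht₁ ⟨ht.1.le, ht.2⟩ ht.1)
  have hφut : φ 0 < φ (u t) := by
    rw [hφ0]; exact pos_of_mul_pos_right hPt (hp t ⟨ht.1.le, ht.2⟩).le
  exact (hφ.lt_iff_lt self_mem_Ici (hu t ⟨ht.1.le, ht.2⟩)).1 hφut

lemma exists_le_mul_of_hasDerivAt_le {E G G' a : ℝ → ℝ} {t₁ R A : ℝ}
    (hE : ContinuousOn E (Ico t₁ R))
    (hEd : ∀ t ∈ Ioo t₁ R, ∃ k, HasDerivAt E k t ∧ k ≤ a t * G' t)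
    (hG : ∀ t ∈ Ico t₁ R, HasDerivAt G (G' t) t) (hG' : ∀ t ∈ Ioo t₁ R, 0 ≤ G' t)
    (ha : ∀ t ∈ Ioo t₁ R, a t ≤ A) (hG₁ : 0 < G t₁) :
    ∃ D, ∀ t ∈ Ico t₁ R, E t ≤ D * G t := by
  set D := max A (E t₁ / G t₁)
  refine ⟨D, fun t ht => ?_⟩
  suffices MonotoneOn (fun s => D * G s - E s) (Ico t₁ R) by
    have hmono := this ⟨le_rfl, ht.1.trans_lt ht.2⟩ ht ht.1
    have : E t₁ ≤ D * G t₁ := (div_le_iff₀ hG₁).1 (le_max_right _ _)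
    dsimp only at hmono
    linarith
  choose! E' hE' hE'le using hEd
  refine monotoneOn_of_hasDerivWithinAt_nonneg (f' := fun s => D * G' s - E' s)
    (convex_Ico t₁ R) (fun s hs => ((hG s hs).continuousAt.continuousWithinAt.const_mul D).sub
      (hE s hs)) (fun s hs => ?_) fun s hs => ?_ <;> rw [interior_Ico] at hs
  · exact (((hG s ⟨hs.1.le, hs.2⟩).const_mul D).sub (hE' s hs)).hasDerivWithinAt
  · have hDa : a s ≤ D := (ha s hs).trans (le_max_left _ _)
    nlinarith [hE'le s hs, hG' s hs]

lemma exists_comp_deriv_le_mul_comp {φ φ' l K f F p p' a w w' : ℝ → ℝ} {η t₁ R : ℝ}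
    (hφc : ContinuousOn φ (Ici 0)) (hφ0 : φ 0 = 0) (hφd : ∀ x > 0, HasDerivAt φ (φ' x) x)
    (hφ'c : ContinuousOn φ' (Ioi 0)) (hφ'pos : ∀ x > 0, 0 < φ' x) (hlpos : ∀ x ≥ 0, 0 < l x)
    (hKc : ContinuousOn K (Ici 0)) (hKd : ∀ x > 0, HasDerivAt K (x * φ' x / l x) x)
    (hfc : Continuous f) (hfpos : ∀ x > η, 0 < f x) (hF : ∀ t, F t = ∫ s in η..t, f s)
    (hpd : ∀ t ∈ Ico t₁ R, HasDerivAt p (p' t) t) (hppos : ∀ t ∈ Ico t₁ R, 0 < p t)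
    (hp'nn : ∀ t ∈ Ico t₁ R, 0 ≤ p' t) (hac : ContinuousOn a (Icc t₁ R))
    (hapos : ∀ t ∈ Ico t₁ R, 0 < a t)
    (hwd : ∀ t ∈ Ico t₁ R, HasDerivAt w (w' t) t) (hw'c : ContinuousOn w' (Ico t₁ R))
    (hw'nn : ∀ t ∈ Ico t₁ R, 0 ≤ w' t)
    (hODE : ∀ t ∈ Ico t₁ R,
      HasDerivAt (fun s => p s * φ (w' s)) (p t * a t * f (w t) * l |w' t|) t)
    (hwt₁ : η < w t₁) : ∃ D, ∀ t ∈ Ico t₁ R, K (w' t) ≤ D * F (w t) := by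
  have hφ : StrictMonoOn φ (Ici 0) := by
    refine strictMonoOn_of_deriv_pos (convex_Ici 0) hφc fun x hx => ?_
    rw [interior_Ici] at hx
    rw [(hφd x hx).deriv]
    exact hφ'pos x hx
  have hwη : ∀ t ∈ Ico t₁ R, η < w t := fun t ht =>
    hwt₁.trans_le (monotoneOn_of_hasDerivAt_nonneg (convex_Ico _ _) hwd hw'nn
      ⟨le_rfl, ht.1.trans_lt ht.2⟩ ht ht.1)
  have hODE' : ∀ t ∈ Ico t₁ R,
      HasDerivAt (fun s => p s * φ (w' s)) (p t * (a t * f (w t)) * l (w' t)) t := fun t ht => by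
    rw [← mul_assoc, ← abs_of_nonneg (hw'nn t ht)]
    exact hODE t ht
  have hw'pos : ∀ t ∈ Ioo t₁ R, 0 < w' t := fun t ht =>
    pos_of_hasDerivAt_mul_comp_pos_s9 hφ hφ0 hppos hw'nn hODE' (fun s hs => mul_pos
      (mul_pos (hppos s hs) (mul_pos (hapos s hs) (hfpos _ (hwη s hs)))) (hlpos _ (hw'nn s hs)))
      ht
  obtain ⟨A, hA⟩ := isCompact_Icc.bddAbove_image hac
  refine exists_le_mul_of_hasDerivAt_le (G' := fun t => f (w t) * w' t) (A := A)
    (hKc.comp hw'c hw'nn) (fun t ht => ?_) (fun t ht => (hasDerivAt_of_eq_integral hfc hF _).comp t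
      (hwd t ht)) (fun t ht => mul_nonneg (hfpos _ (hwη t ⟨ht.1.le, ht.2⟩)).le
      (hw'nn t ⟨ht.1.le, ht.2⟩)) (fun t ht => hA ⟨t, ⟨ht.1.le, ht.2.le⟩, rfl⟩)
    (pos_of_eq_integral hfc hfpos hF hwt₁)
  have ht' : t ∈ Ico t₁ R := ⟨ht.1.le, ht.2⟩
  have hw't := hw'pos t ht
  have hφ'c' : ContinuousAt φ' (w' t) := hφ'c.continuousAt (Ioi_mem_nhds hw't)
  obtain ⟨k, hk, hkle⟩ := exists_hasDerivAt_comp_le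
    (hasStrictDerivAt_of_hasDerivAt_of_continuousAt
      ((eventually_gt_nhds hw't).mono hφd) hφ'c')
    (hφ'pos _ hw't) (hlpos _ hw't.le) (hKd _ hw't)
    (hw'c.continuousAt (Ico_mem_nhds ht.1 ht.2)) hw't.le (hpd t ht')
    (hppos t ht') (hp'nn t ht') (hφ0 ▸ hφ.monotoneOn self_mem_Ici hw't.le hw't.le) (hODE' t ht')
  exact ⟨k, hk, hkle.trans_eq (mul_assoc _ _ _)⟩

lemma integrableOn_one_div_comp_of_le {K Kinv f F w w' : ℝ → ℝ} {η t₁ R c : ℝ}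
    (hK : StrictMonoOn K (Ici 0)) (hK0 : K 0 = 0) (hsurj : SurjOn K (Ici 0) (Ici 0))
    (hinv : LeftInvOn Kinv K (Ici 0)) (hη : 0 ≤ η) (hfc : Continuous f)
    (hfpos : ∀ x > η, 0 < f x) (hF : ∀ t, F t = ∫ s in η..t, f s) (ht₁ : t₁ < R)
    (hwd : ∀ t ∈ Ico t₁ R, HasDerivAt w (w' t) t) (hw'c : ContinuousOn w' (Ico t₁ R))
    (hw'nn : ∀ t ∈ Ico t₁ R, 0 ≤ w' t) (hblow : Tendsto w (𝓝[<] R) atTop) (hwt₁ : η < w t₁)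
    (hc : 1 ≤ c) (hKw' : ∀ t ∈ Ico t₁ R, K (w' t) ≤ F (c * w t)) :
    IntegrableOn (fun s => 1 / Kinv (F s)) (Ioi (c * w t₁)) := by
  have hcw : η < c * w t₁ := hwt₁.trans_le (le_mul_of_one_le_left (hη.trans hwt₁.le) hc)
  have hsub : Ici (c * w t₁) ⊆ Ioi η := fun s hs => hcw.trans_le hs
  have hFpos : ∀ s > η, 0 < F s := fun s hs => pos_of_eq_integral hfc hfpos hF hs
  have hpos : ∀ s > η, 0 < Kinv (F s) := fun s hs => pos_of_leftInvOn hK0 hsurj hinv (hFpos s hs)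
  have hFc : Continuous F :=
    continuous_iff_continuousAt.2 fun t => (hasDerivAt_of_eq_integral hfc hF t).continuousAt
  refine integrableOn_Ioi_of_mul_deriv_le (v := fun t => c * w t) (v' := fun t => c * w' t)
    (M := c) ht₁ (fun t ht => (hwd t ht).const_mul c) (continuousOn_const.mul hw'c)
    (fun t ht => mul_nonneg (by linarith) (hw'nn t ht)) ?_
    (fun y hy => (one_div_pos.2 (hpos y (hsub hy))).le) (fun t ht => ?_)
    (hblow.const_mul_atTop (by linarith))
  · exact continuousOn_const.div ((continuousOn_Ioi_of_leftInvOn hK hK0 hsurj hinv).comp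
      hFc.continuousOn fun s hs => hFpos s (hsub hs)) fun s hs => (hpos s (hsub hs)).ne'
  · have hwt : η < c * w t := hsub (mul_le_mul_of_nonneg_left
      (monotoneOn_of_hasDerivAt_nonneg (convex_Ico _ _) hwd hw'nn
        ⟨le_rfl, ht.1.trans_lt ht.2⟩ ht ht.1)
      (by linarith))
    have hw'le : w' t ≤ Kinv (F (c * w t)) :=
      (hK.le_iff_le_of_leftInvOn hsurj hinv (hw'nn t ht) (hFpos _ hwt).le).1 (hKw' t ht)
    rw [one_div_mul_eq_div, div_le_iff₀ (hpos _ hwt)]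
    nlinarith

theorem stmt_9_general
    (φ φ' l : ℝ → ℝ)
    (hφc : ContinuousOn φ (Ici 0)) (hφ0 : φ 0 = 0)
    (hφd : ∀ t : ℝ, 0 < t → HasDerivAt φ (φ' t) t)
    (hφ'c : ContinuousOn φ' (Ioi 0))
    (hφ'pos : ∀ t : ℝ, 0 < t → 0 < φ' t)
    (hlc : ContinuousOn l (Ici 0)) (hlpos : ∀ t ∈ Ici (0:ℝ), 0 < l t)
    (hint0 : IntegrableOn (fun s => s * φ' s / l s) (Ioo 0 1))
    (hintinf : ¬ IntegrableOn (fun s => s * φ' s / l s) (Ioi 1))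
    (K Kinv : ℝ → ℝ)
    (hK : ∀ t, K t = ∫ s in (0:ℝ)..t, s * φ' s / l s)
    (hKinv : ∀ t : ℝ, 0 ≤ t → Kinv (K t) = t)
    (C ηb₀ : ℝ) (hC : 1 ≤ C) (hηb₀ : 0 ≤ ηb₀)
    (f : ℝ → ℝ) (hfc : Continuous f)
    (hfpos : ∀ t : ℝ, 0 < t → 0 < f t)
    (hfCinc : CIncreasingOn C f (Ioi ηb₀))
    (p p' : ℝ → ℝ)
    (hpd : ∀ t ∈ Ici (0:ℝ), HasDerivWithinAt p (p' t) (Ici 0) t)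
    (hppos : ∀ t ∈ Ioi (0:ℝ), 0 < p t)
    (hp'nn : ∀ t ∈ Ioi (0:ℝ), 0 ≤ p' t)
    (a : ℝ → ℝ) (hac : ContinuousOn a (Ici (0:ℝ)))
    (hapos : ∀ t ∈ Ici (0:ℝ), 0 < a t)
    (R : ℝ) (hR : 0 < R)
    (w w' : ℝ → ℝ)
    (hwd : ∀ t ∈ Ico (0:ℝ) R, HasDerivWithinAt w (w' t) (Ico 0 R) t)
    (hw'c : ContinuousOn w' (Ico (0:ℝ) R))
    (hwnn : ∀ t ∈ Ico (0:ℝ) R, 0 ≤ w t ∧ 0 ≤ w' t)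
    (hODE : ∀ t ∈ Ioo (0:ℝ) R,
      HasDerivAt (fun s => p s * φ (w' s)) (p t * a t * f (w t) * l |w' t|) t)
    (hblow : Tendsto w (𝓝[<] R) atTop)
    (F : ℝ → ℝ) (hF : ∀ t, F t = ∫ s in ηb₀..t, f s) :
    ∃ T : ℝ, ηb₀ < T ∧ IntegrableOn (fun s => 1 / Kinv (F s)) (Ioi T) := by
  have hfpos' : ∀ t > ηb₀, 0 < f t := fun t ht => hfpos t (hηb₀.trans_lt ht)
  set J := fun s => s * φ' s / l s
  have hJc : ContinuousOn J (Ioi 0) := (continuousOn_id.mul hφ'c).div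
    (hlc.mono Ioi_subset_Ici_self) fun s hs => (hlpos s (mem_Ici.2 (le_of_lt hs))).ne'
  have hJpos : ∀ s > 0, 0 < J s := fun s hs => div_pos (mul_pos hs (hφ'pos s hs)) (hlpos s hs.le)
  have hK0 : K 0 = 0 := by simp [hK]
  have hKsm := strictMonoOn_of_eq_integral_zero hJc hJpos hint0 hK
  have hKsurj := surjOn_of_eq_integral_zero hJc hJpos hint0 hintinf hK
  obtain ⟨t₁, hwt₁, ht₁⟩ : ∃ t₁, ηb₀ < w t₁ ∧ t₁ ∈ Ioo 0 R :=
    ((hblow.eventually_gt_atTop ηb₀).and (Ioo_mem_nhdsLT hR)).exists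
  have hsub : Ico t₁ R ⊆ Ioo 0 R := fun t ht => ⟨ht₁.1.trans_le ht.1, ht.2⟩
  have hwd' : ∀ t ∈ Ico t₁ R, HasDerivAt w (w' t) t := fun t ht =>
    (hwd t ⟨(hsub ht).1.le, ht.2⟩).hasDerivAt (Ico_mem_nhds (hsub ht).1 ht.2)
  have hw'c' := hw'c.mono (Ico_subset_Ico_left ht₁.1.le)
  have hw'nn : ∀ t ∈ Ico t₁ R, 0 ≤ w' t := fun t ht => (hwnn t ⟨(hsub ht).1.le, ht.2⟩).2
  obtain ⟨D, hD⟩ := exists_comp_deriv_le_mul_comp hφc hφ0 hφd hφ'c hφ'pos hlpos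
    (continuousOn_of_eq_integral_zero hJc hint0 hK)
    (fun x hx => hasDerivAt_of_eq_integral_zero hJc hint0 hK hx) hfc hfpos' hF
    (fun t ht => (hpd t (hsub ht).1.le).hasDerivAt (Ici_mem_nhds (hsub ht).1))
    (fun t ht => hppos t (hsub ht).1) (fun t ht => hp'nn t (hsub ht).1)
    (hac.mono fun t ht => ht₁.1.le.trans ht.1) (fun t ht => hapos t (hsub ht).1.le)
    hwd' hw'c' hw'nn (fun t ht => hODE t (hsub ht)) hwt₁
  obtain ⟨c, hc, hcF⟩ := hfCinc.exists_mul_le_of_eq_integral hηb₀ (by linarith) hfc hfpos' hF D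
  refine ⟨c * w t₁, hwt₁.trans_le (le_mul_of_one_le_left (hηb₀.trans hwt₁.le) hc),
    integrableOn_one_div_comp_of_le hKsm hK0 hKsurj hKinv hηb₀ hfc hfpos' hF ht₁.2 hwd' hw'c'
      hw'nn hblow hwt₁ hc fun t ht => ?_⟩
  have hwt : ηb₀ < w t := hwt₁.trans_le (monotoneOn_of_hasDerivAt_nonneg (convex_Ico _ _) hwd'
    hw'nn ⟨le_rfl, ht.1.trans_lt ht.2⟩ ht ht.1)
  exact (hD t ht).trans (hcF _ hwt)

/-- Proposition 3.12 (core): a solution of the Neumann problem for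
`[℘ φ(w')]' = ℘ a f(w) l(|w'|)` blowing up at a finite `R` forces the
Keller–Osserman condition at infinity. -/
theorem stmt_9
    (φ φ' l : ℝ → ℝ)
    (hφc : ContinuousOn φ (Ici 0)) (hφ0 : φ 0 = 0)
    (hφd : ∀ t : ℝ, 0 < t → HasDerivAt φ (φ' t) t)
    (hφ'c : ContinuousOn φ' (Ioi 0))
    (hφ'pos : ∀ t : ℝ, 0 < t → 0 < φ' t)
    (hlc : ContinuousOn l (Ici 0)) (hlpos : ∀ t ∈ Ici (0:ℝ), 0 < l t)
    (hint0 : IntegrableOn (fun s => s * φ' s / l s) (Ioo 0 1))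
    (hintinf : ¬ IntegrableOn (fun s => s * φ' s / l s) (Ioi 1))
    (K Kinv : ℝ → ℝ)
    (hK : ∀ t, K t = ∫ s in (0:ℝ)..t, s * φ' s / l s)
    (hKinv : ∀ t : ℝ, 0 ≤ t → Kinv (K t) = t)
    (C ηb₀ : ℝ) (hC : 1 ≤ C) (hηb₀ : 0 ≤ ηb₀)
    (f : ℝ → ℝ) (hfc : Continuous f) (hf0 : f 0 = 0)
    (hfpos : ∀ t : ℝ, 0 < t → 0 < f t)
    (hfCinc : CIncreasingOn C f (Ioi ηb₀))
    (p p' : ℝ → ℝ)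
    (hpd : ∀ t ∈ Ici (0:ℝ), HasDerivWithinAt p (p' t) (Ici 0) t)
    (hp'c : ContinuousOn p' (Ici (0:ℝ)))
    (hppos : ∀ t ∈ Ioi (0:ℝ), 0 < p t)
    (hp'nn : ∀ t ∈ Ioi (0:ℝ), 0 ≤ p' t)
    (a : ℝ → ℝ) (hac : ContinuousOn a (Ici (0:ℝ)))
    (hapos : ∀ t ∈ Ici (0:ℝ), 0 < a t)
    (R : ℝ) (hR : 0 < R)
    (w w' : ℝ → ℝ)
    (hwd : ∀ t ∈ Ico (0:ℝ) R, HasDerivWithinAt w (w' t) (Ico 0 R) t)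
    (hw'c : ContinuousOn w' (Ico (0:ℝ) R))
    (hw'0 : w' 0 = 0)
    (hwnn : ∀ t ∈ Ico (0:ℝ) R, 0 ≤ w t ∧ 0 ≤ w' t)
    (hODE : ∀ t ∈ Ioo (0:ℝ) R,
      HasDerivAt (fun s => p s * φ (w' s)) (p t * a t * f (w t) * l |w' t|) t)
    (hblow : Tendsto w (𝓝[<] R) atTop)
    (F : ℝ → ℝ) (hF : ∀ t, F t = ∫ s in ηb₀..t, f s) :
    ∃ T : ℝ, ηb₀ < T ∧ IntegrableOn (fun s => 1 / Kinv (F s)) (Ioi T) :=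
  stmt_9_general φ φ' l hφc hφ0 hφd hφ'c hφ'pos hlc hlpos hint0 hintinf K Kinv hK hKinv C ηb₀ hC
    hηb₀ f hfc hfpos hfCinc p p' hpd hppos hp'nn a hac hapos R hR w w' hwd hw'c hwnn hODE hblow F hF
end

section
/- Let φ ∈ C([0,∞)) ∩ C¹((0,∞)) with φ(0) = 0 and φ' > 0 on (0,∞), and l ∈ C([0,∞)) with l > 0 on (0,∞). (a) If there exist χ₁ > −1 and C ≥ 1 such that the function t ↦ t^{1−χ₁}·φ'(t)/l(t) is C-increasing on (0,∞), then t ↦ t·φ'(t)/l(t) is integrable on (0,1) and ∫₁^∞ t·φ'(t)/l(t) dt = ∞. (b) If there exist χ₂ ≥ 0 and C ≥ 1 such that the function t ↦ t^{−χ₂}·φ(t)/l(t) is C-increasing on (0,∞), then t ↦ t^{−χ₂}·φ(t)/l(t) is bounded on (0,1); in particular, if χ₂ > 0 then φ(t)/l(t) → 0 as t → 0⁺. -/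
open Set MeasureTheory Filter Topology

/-- Lemma 8.8: consequences of the structural conditions (χ₁) and (χ₂). -/
theorem stmt_15
    (φ φ' l : ℝ → ℝ)
    (hφc : ContinuousOn φ (Ici 0)) (hφ0 : φ 0 = 0)
    (hφd : ∀ t : ℝ, 0 < t → HasDerivAt φ (φ' t) t)
    (hφ'c : ContinuousOn φ' (Ioi 0))
    (hφ'pos : ∀ t : ℝ, 0 < t → 0 < φ' t)
    (hlc : ContinuousOn l (Ici 0)) (hlpos : ∀ t : ℝ, 0 < t → 0 < l t) :
    (∀ χ₁ C : ℝ, -1 < χ₁ → 1 ≤ C →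
      CIncreasingOn C (fun t => t ^ (1 - χ₁) * φ' t / l t) (Ioi 0) →
      IntegrableOn (fun t => t * φ' t / l t) (Ioo 0 1) ∧
        ¬ IntegrableOn (fun t => t * φ' t / l t) (Ioi 1)) ∧
    (∀ χ₂ C : ℝ, 0 ≤ χ₂ → 1 ≤ C →
      CIncreasingOn C (fun t => t ^ (-χ₂) * φ t / l t) (Ioi 0) →
      (∃ M : ℝ, ∀ t ∈ Ioo (0:ℝ) 1, t ^ (-χ₂) * φ t / l t ≤ M) ∧
        (0 < χ₂ → Tendsto (fun t => φ t / l t) (𝓝[>] 0) (𝓝 0))) := by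
  constructor
  · -- part (a)
    intro χ₁ C hχ hC hCI
    set h : ℝ → ℝ := fun t => t ^ (1 - χ₁) * φ' t / l t with hh
    have hCpos : (0:ℝ) < C := lt_of_lt_of_le one_pos hC
    have hhpos : ∀ t : ℝ, 0 < t → 0 < h t := fun t ht =>
      div_pos (mul_pos (Real.rpow_pos_of_pos ht _) (hφ'pos t ht)) (hlpos t ht)
    have key : ∀ t : ℝ, 0 < t → t * φ' t / l t = t ^ χ₁ * h t := by
      intro t ht
      have : t ^ χ₁ * t ^ (1 - χ₁) = t := by
        rw [← Real.rpow_add ht]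
        norm_num
      simp only [hh]
      rw [mul_div_assoc', ← mul_assoc, this]
    have hfnn : ∀ t : ℝ, 0 < t → 0 ≤ t * φ' t / l t := fun t ht =>
      le_of_lt (div_pos (mul_pos ht (hφ'pos t ht)) (hlpos t ht))
    constructor
    · -- integrable on (0,1)
      have hmeas : AEStronglyMeasurable (fun t => t * φ' t / l t)
          (volume.restrict (Ioo (0:ℝ) 1)) := by
        apply ContinuousOn.aestronglyMeasurable _ measurableSet_Ioo
        exact (continuousOn_id.mul (hφ'c.mono (fun x hx => hx.1))).div
          (hlc.mono (fun x hx => le_of_lt hx.1)) (fun x hx => (hlpos x hx.1).ne')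
      have hbd : IntegrableOn (fun t : ℝ => (C * h 1) * t ^ χ₁) (Ioo 0 1) := by
        have := (intervalIntegral.intervalIntegrable_rpow' (a := 0) (b := 1) hχ)
        rw [intervalIntegrable_iff, uIoc_of_le (zero_le_one' ℝ)] at this
        exact (this.mono_set Ioo_subset_Ioc_self).const_mul _
      refine hbd.integrable.mono' hmeas ?_
      filter_upwards [ae_restrict_mem measurableSet_Ioo] with t ht
      rw [Real.norm_of_nonneg (hfnn t ht.1), key t ht.1, mul_comm (C * h 1)]
      have := hCI t (mem_Ioi.mpr ht.1) 1 (mem_Ioi.mpr one_pos) (le_of_lt ht.2)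
      exact mul_le_mul_of_nonneg_left this (Real.rpow_nonneg ht.1.le _)
    · -- not integrable on (1,∞)
      intro H
      have hbd : IntegrableOn (fun t : ℝ => (h 1 / C) * t ^ χ₁) (Ioi 1) := by
        refine H.mono' ?_ ?_
        · apply ContinuousOn.aestronglyMeasurable _ measurableSet_Ioi
          exact continuousOn_const.mul (continuousOn_id.rpow_const (fun x hx =>
            Or.inl (ne_of_gt (lt_trans one_pos hx))))
        · filter_upwards [ae_restrict_mem measurableSet_Ioi] with t ht
          have ht0 : (0:ℝ) < t := lt_trans one_pos ht
          have h1 : h 1 / C ≤ h t := by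
            rw [div_le_iff₀ hCpos, mul_comm]
            exact hCI 1 (mem_Ioi.mpr one_pos) t (mem_Ioi.mpr ht0) ht.le
          rw [Real.norm_of_nonneg (mul_nonneg (div_nonneg (hhpos 1 one_pos).le hCpos.le)
            (Real.rpow_nonneg ht0.le _)), key t ht0, mul_comm]
          exact mul_le_mul_of_nonneg_left h1 (Real.rpow_nonneg ht0.le _)
      have hc : (h 1 / C) ≠ 0 := (div_pos (hhpos 1 one_pos) hCpos).ne'
      have : IntegrableOn (fun t : ℝ => t ^ χ₁) (Ioi 1) := by
        have := (integrable_const_mul_iff (isUnit_iff_ne_zero.mpr hc)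
          (fun t : ℝ => t ^ χ₁)).mp hbd
        exact this
      rw [integrableOn_Ioi_rpow_iff one_pos] at this
      linarith
  · -- part (b)
    intro χ₂ C hχ hC hCI
    set g : ℝ → ℝ := fun t => t ^ (-χ₂) * φ t / l t with hg
    have hM : ∀ t ∈ Ioo (0:ℝ) 1, g t ≤ C * g 1 := fun t ht =>
      hCI t (mem_Ioi.mpr ht.1) 1 (mem_Ioi.mpr one_pos) ht.2.le
    refine ⟨⟨C * g 1, hM⟩, ?_⟩
    intro hχ2
    have hφpos : ∀ t : ℝ, 0 < t → 0 < φ t := by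
      intro t ht
      have hmono : StrictMonoOn φ (Ici 0) := by
        apply strictMonoOn_of_deriv_pos (convex_Ici 0) hφc
        intro x hx
        rw [interior_Ici] at hx
        rw [(hφd x hx).deriv]
        exact hφ'pos x hx
      have := hmono (self_mem_Ici) (le_of_lt ht) ht
      rwa [hφ0] at this
    have key : ∀ t : ℝ, 0 < t → φ t / l t = t ^ χ₂ * g t := by
      intro t ht
      have h1 : t ^ χ₂ * t ^ (-χ₂) = 1 := by
        rw [← Real.rpow_add ht]; norm_num
      simp only [hg]
      rw [mul_div_assoc', ← mul_assoc, h1, one_mul]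
    have htend : Tendsto (fun t : ℝ => t ^ χ₂ * (C * g 1)) (𝓝[>] 0) (𝓝 0) := by
      have : Tendsto (fun t : ℝ => t ^ χ₂) (𝓝[>] 0) (𝓝 0) := by
        have hc : ContinuousAt (fun t : ℝ => t ^ χ₂) 0 :=
          Real.continuousAt_rpow_const 0 χ₂ (Or.inr hχ)
        have := hc.continuousWithinAt (s := Ioi 0)
        rwa [ContinuousWithinAt, Real.zero_rpow hχ2.ne'] at this
      simpa using this.mul_const (C * g 1)
    refine squeeze_zero' ?_ ?_ htend
    · filter_upwards [self_mem_nhdsWithin] with t ht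
      exact le_of_lt (div_pos (hφpos t ht) (hlpos t ht))
    · filter_upwards [Ioo_mem_nhdsGT one_pos] with t ht
      rw [key t ht.1]
      exact mul_le_mul_of_nonneg_left (hM t ht) (Real.rpow_nonneg ht.1.le _)
end

section
/- Let φ ∈ C([0,∞)) ∩ C¹((0,∞)) with φ(0) = 0 and φ' > 0 on (0,∞), and l ∈ C([0,∞)) with l > 0 on (0,∞). Assume there exist χ₁ > −1 and C ≥ 1 such that t ↦ t^{1−χ₁}·φ'(t)/l(t) is C-increasing on (0,∞); then K(t) = ∫₀^t s·φ'(s)/l(s) ds defines an increasing bijection of [0,∞) onto [0,∞), with inverse K⁻¹. Let η̄₀ ≥ 0 and let F be any positive function on (η̄₀,∞). Then there exists B ≥ 1, depending only on C and χ₁ (one may take B = C^{1/(χ₁+1)}), such that for every σ ∈ (0,1] and every t ∈ (η̄₀,∞): σ^{1/(χ₁+1)}/K⁻¹(σ·F(t)) ≤ B/K⁻¹(F(t)). -/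
open Set MeasureTheory

/-!
Write `K t = ∫₀ᵗ g` with `g s = s^χ₁ h(s)` and `h` `C`-increasing. The bound `h ≤ C h(b)`
on `(0, b]` makes `g` integrable at `0` (as `χ₁ > -1`), and the substitution `u = (t/s) v`
shows that `K(t) / t^(χ₁+1)` is again `C`-increasing. Hence `K` grows at least like
`t^(χ₁+1)`, so it maps `[0, ∞)` onto `[0, ∞)`, and comparing `K` at `y = K⁻¹(σ u)` and at
`(σ/C)^(1/(χ₁+1)) K⁻¹(u)` gives the claim.
-/

open Filter

section GrowthIndex

variable {K : ℝ → ℝ} {α C : ℝ}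

theorem tendsto_atTop_of_cIncreasingOn_div_rpow (hα : 0 < α) (hC : 0 < C) (hK1 : 0 < K 1)
    (hKC : CIncreasingOn C (fun t => K t / t ^ α) (Ioi 0)) : Tendsto K atTop atTop := by
  have hlow : ∀ t : ℝ, 1 ≤ t → K 1 / C * t ^ α ≤ K t := by
    intro t ht
    have hKt := hKC 1 (mem_Ioi.2 one_pos) t (mem_Ioi.2 (one_pos.trans_le ht)) ht
    simp only [Real.one_rpow, div_one] at hKt
    have htα : 0 < t ^ α := Real.rpow_pos_of_pos (one_pos.trans_le ht) α
    rw [div_mul_eq_mul_div, div_le_iff₀ hC]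
    calc K 1 * t ^ α ≤ C * (K t / t ^ α) * t ^ α := by gcongr
      _ = K t * C := by field_simp
  refine tendsto_atTop_mono' _ (eventually_atTop.2 ⟨1, hlow⟩) ?_
  exact (tendsto_rpow_atTop hα).const_mul_atTop (div_pos hK1 hC)

theorem rpow_mul_le_of_cIncreasingOn_div_rpow (hα : 0 < α) (hC : 0 < C)
    (hK : StrictMonoOn K (Ici 0)) (hKC : CIncreasingOn C (fun t => K t / t ^ α) (Ioi 0))
    {σ x y : ℝ} (hσ : 0 < σ) (hσC : σ ≤ C) (hx : 0 < x) (hy : 0 < y)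
    (hxy : K y = σ * K x) :
    σ ^ (1 / α) * x ≤ C ^ (1 / α) * y := by
  have hσC' : 0 < σ / C := div_pos hσ hC
  set lam := (σ / C) ^ (1 / α)
  have hlam : 0 < lam := by positivity
  have hlam_pow : lam ^ α = σ / C := by
    rw [← Real.rpow_mul hσC'.le, one_div_mul_cancel hα.ne', Real.rpow_one]
  have hlx : lam * x ≤ x :=
    mul_le_of_le_one_left hx.le
      (Real.rpow_le_one hσC'.le ((div_le_one hC).2 hσC) (by positivity))
  have hK_lam : K (lam * x) ≤ K y := by
    have hKx := hKC _ (mul_pos hlam hx) x hx hlx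
    simp only at hKx
    rw [Real.mul_rpow hlam.le hx.le, hlam_pow, div_le_iff₀ (by positivity)] at hKx
    calc K (lam * x) ≤ C * (K x / x ^ α) * (σ / C * x ^ α) := hKx
      _ = K y := by rw [hxy]; field_simp
  have hlam_y : lam * x ≤ y :=
    (hK.le_iff_le (mem_Ici.2 (mul_pos hlam hx).le) (mem_Ici.2 hy.le)).1 hK_lam
  calc σ ^ (1 / α) * x = C ^ (1 / α) * (lam * x) := by
        rw [show lam = σ ^ (1 / α) / C ^ (1 / α) from Real.div_rpow hσ.le hC.le _]
        field_simp
    _ ≤ C ^ (1 / α) * y := by gcongr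

end GrowthIndex

section Primitive

variable {g h : ℝ → ℝ} {χ C : ℝ}

theorem integrableOn_Ioc_of_cIncreasingOn (hgc : ContinuousOn g (Ioi 0)) (hχ : -1 < χ)
    (hh : CIncreasingOn C h (Ioi 0)) (hh0 : ∀ s, 0 < s → 0 ≤ h s)
    (hgh : ∀ s, 0 < s → g s = s ^ χ * h s) {b : ℝ} (hb : 0 < b) :
    IntegrableOn g (Ioc 0 b) := by
  have hdom : IntegrableOn (fun s => C * h b * s ^ χ) (Ioc 0 b) :=
    ((intervalIntegrable_iff_integrableOn_Ioc_of_le hb.le).1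
      (intervalIntegral.intervalIntegrable_rpow' hχ)).const_mul _
  refine hdom.mono' ((hgc.mono Ioc_subset_Ioi_self).aestronglyMeasurable measurableSet_Ioc) ?_
  refine (ae_restrict_iff' measurableSet_Ioc).2 (Eventually.of_forall fun s hs => ?_)
  rw [hgh s hs.1, norm_mul, Real.norm_of_nonneg (Real.rpow_nonneg hs.1.le _),
    Real.norm_of_nonneg (hh0 s hs.1), mul_comm]
  exact mul_le_mul_of_nonneg_right (hh s hs.1 b hb hs.2) (Real.rpow_nonneg hs.1.le _)

theorem intervalIntegrable_of_cIncreasingOn (hgc : ContinuousOn g (Ioi 0)) (hχ : -1 < χ)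
    (hh : CIncreasingOn C h (Ioi 0)) (hh0 : ∀ s, 0 < s → 0 ≤ h s)
    (hgh : ∀ s, 0 < s → g s = s ^ χ * h s) {a b : ℝ} (ha : 0 ≤ a) (hb : 0 ≤ b) :
    IntervalIntegrable g volume a b := by
  have from_zero : ∀ b : ℝ, 0 ≤ b → IntervalIntegrable g volume 0 b := by
    intro b hb
    rcases hb.eq_or_lt with rfl | hb
    · exact IntervalIntegrable.refl
    · exact (intervalIntegrable_iff_integrableOn_Ioc_of_le hb.le).2
        (integrableOn_Ioc_of_cIncreasingOn hgc hχ hh hh0 hgh hb)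
  exact (from_zero a ha).symm.trans (from_zero b hb)

theorem cIncreasingOn_integral_div_rpow (hgc : ContinuousOn g (Ioi 0)) (hχ : -1 < χ)
    (hh : CIncreasingOn C h (Ioi 0)) (hh0 : ∀ s, 0 < s → 0 ≤ h s)
    (hgh : ∀ s, 0 < s → g s = s ^ χ * h s) :
    CIncreasingOn C (fun t => (∫ u in (0:ℝ)..t, g u) / t ^ (χ + 1)) (Ioi 0) := by
  intro s (hs : 0 < s) t (ht : 0 < t) hst
  have hint : ∀ {a b : ℝ}, 0 ≤ a → 0 ≤ b → IntervalIntegrable g volume a b :=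
    intervalIntegrable_of_cIncreasingOn hgc hχ hh hh0 hgh
  have hpoint : ∀ u ∈ Ioo 0 s, g u ≤ C * (s / t) ^ χ * g (t / s * u) := by
    rintro u ⟨hu, -⟩
    have hv : 0 < t / s * u := by positivity
    have huv : u ≤ t / s * u := le_mul_of_one_le_left hu.le ((one_le_div hs).2 hst)
    calc g u = u ^ χ * h u := hgh u hu
      _ ≤ u ^ χ * (C * h (t / s * u)) :=
        mul_le_mul_of_nonneg_left (hh u hu _ hv huv) (by positivity)
      _ = C * (s / t) ^ χ * ((t / s * u) ^ χ * h (t / s * u)) := by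
        have hu' : s / t * (t / s * u) = u := by field_simp
        rw [mul_assoc C, ← mul_assoc ((s / t) ^ χ), ← Real.mul_rpow (by positivity) hv.le,
          hu']
        ring
      _ = C * (s / t) ^ χ * g (t / s * u) := by rw [hgh _ hv]
  have hsubst : ∫ u in (0:ℝ)..s, g (t / s * u) = s / t * ∫ u in (0:ℝ)..t, g u := by
    rw [intervalIntegral.integral_comp_mul_left g (by positivity), mul_zero,
      div_mul_cancel₀ t hs.ne', inv_div, smul_eq_mul]
  have hcomp : IntervalIntegrable (fun u => g (t / s * u)) volume 0 s := by
    simpa [div_div_eq_mul_div, hs.ne', ht.ne'] using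
      (hint le_rfl ht.le).comp_mul_left (c := t / s)
  have hbound : ∫ u in (0:ℝ)..s, g u ≤ C * (s / t) ^ (χ + 1) * ∫ u in (0:ℝ)..t, g u :=
    calc ∫ u in (0:ℝ)..s, g u ≤ ∫ u in (0:ℝ)..s, C * (s / t) ^ χ * g (t / s * u) :=
          intervalIntegral.integral_mono_on_of_le_Ioo hs.le (hint le_rfl hs.le)
            (hcomp.const_mul _) hpoint
      _ = C * (s / t) ^ (χ + 1) * ∫ u in (0:ℝ)..t, g u := by
        rw [intervalIntegral.integral_const_mul, hsubst, Real.rpow_add_one (by positivity)]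
        ring
  rw [Real.div_rpow hs.le ht.le] at hbound
  dsimp only
  rw [div_le_iff₀ (by positivity)]
  calc ∫ u in (0:ℝ)..s, g u
      ≤ C * (s ^ (χ + 1) / t ^ (χ + 1)) * ∫ u in (0:ℝ)..t, g u := hbound
    _ = C * ((∫ u in (0:ℝ)..t, g u) / t ^ (χ + 1)) * s ^ (χ + 1) := by ring

theorem strictMonoOn_integral_of_pos
    (hint : ∀ a b : ℝ, 0 ≤ a → 0 ≤ b → IntervalIntegrable g volume a b)
    (hpos : ∀ s, 0 < s → 0 < g s) :
    StrictMonoOn (fun t => ∫ s in (0:ℝ)..t, g s) (Ici 0) := by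
  intro a ha b hb hab
  have hpos_ab : 0 < ∫ s in a..b, g s :=
    intervalIntegral.intervalIntegral_pos_of_pos_on (hint a b ha hb)
      (fun x hx => hpos x (lt_of_le_of_lt ha hx.1)) hab
  dsimp only
  rw [← intervalIntegral.integral_add_adjacent_intervals (hint 0 a le_rfl ha) (hint a b ha hb)]
  linarith

theorem exists_integral_eq_of_tendsto
    (hint : ∀ b : ℝ, 0 ≤ b → IntervalIntegrable g volume 0 b)
    (htop : Tendsto (fun t => ∫ s in (0:ℝ)..t, g s) atTop atTop) {y : ℝ} (hy : 0 ≤ y) :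
    ∃ x, 0 ≤ x ∧ ∫ s in (0:ℝ)..x, g s = y := by
  obtain ⟨T, hTy, hT⟩ := ((htop.eventually_ge_atTop y).and (eventually_ge_atTop 0)).exists
  have hcont := intervalIntegral.continuousOn_primitive_interval' (hint T hT) left_mem_uIcc
  rw [uIcc_of_le hT] at hcont
  obtain ⟨x, hx, hxy⟩ := intermediate_value_Icc hT hcont ⟨by simpa using hy, hTy⟩
  exact ⟨x, hx.1, hxy⟩

theorem strictMonoOn_integral_of_cIncreasingOn (hgc : ContinuousOn g (Ioi 0)) (hχ : -1 < χ)
    (hh : CIncreasingOn C h (Ioi 0)) (hhpos : ∀ s, 0 < s → 0 < h s)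
    (hgh : ∀ s, 0 < s → g s = s ^ χ * h s) :
    StrictMonoOn (fun t => ∫ s in (0:ℝ)..t, g s) (Ici 0) :=
  strictMonoOn_integral_of_pos
    (fun _ _ => intervalIntegrable_of_cIncreasingOn hgc hχ hh (fun s hs => (hhpos s hs).le) hgh)
    fun s hs => by rw [hgh s hs]; have := hhpos s hs; positivity

theorem surjOn_integral_of_cIncreasingOn (hgc : ContinuousOn g (Ioi 0)) (hχ : -1 < χ)
    (hh : CIncreasingOn C h (Ioi 0)) (hhpos : ∀ s, 0 < s → 0 < h s)
    (hgh : ∀ s, 0 < s → g s = s ^ χ * h s) :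
    SurjOn (fun t => ∫ s in (0:ℝ)..t, g s) (Ioi 0) (Ioi 0) := by
  have hmono := strictMonoOn_integral_of_cIncreasingOn hgc hχ hh hhpos hgh
  have hK1 : 0 < ∫ s in (0:ℝ)..1, g s := by
    simpa using hmono (le_refl (0:ℝ)) (mem_Ici.2 zero_le_one) one_pos
  have hC : 0 < C := pos_of_mul_pos_left ((hhpos 1 one_pos).trans_le
    (hh 1 (mem_Ioi.2 one_pos) 1 (mem_Ioi.2 one_pos) le_rfl)) (hhpos 1 one_pos).le
  have htop := tendsto_atTop_of_cIncreasingOn_div_rpow (by linarith) hC hK1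
    (cIncreasingOn_integral_div_rpow hgc hχ hh (fun s hs => (hhpos s hs).le) hgh)
  intro u (hu : 0 < u)
  obtain ⟨x, hx, hKx⟩ := exists_integral_eq_of_tendsto
    (fun _ hb => intervalIntegrable_of_cIncreasingOn hgc hχ hh (fun s hs => (hhpos s hs).le) hgh
      le_rfl hb) htop hu.le
  refine ⟨x, (hmono.lt_iff_lt (le_refl (0:ℝ)) hx).1 ?_, hKx⟩
  simpa [hKx] using hu

end Primitive

theorem stmt_16_general
    (φ' l : ℝ → ℝ)
    (hφ'c : ContinuousOn φ' (Ioi 0))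
    (hφ'pos : ∀ t : ℝ, 0 < t → 0 < φ' t)
    (hlc : ContinuousOn l (Ici 0)) (hlpos : ∀ t : ℝ, 0 < t → 0 < l t)
    (χ₁ C : ℝ) (hχ₁ : -1 < χ₁) (hC : 1 ≤ C)
    (hchi1 : CIncreasingOn C (fun t => t ^ (1 - χ₁) * φ' t / l t) (Ioi 0))
    (K Kinv : ℝ → ℝ)
    (hK : ∀ t, K t = ∫ s in (0:ℝ)..t, s * φ' s / l s)
    (hKinv : ∀ t : ℝ, 0 ≤ t → Kinv (K t) = t)
    (ηb₀ : ℝ)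
    (F : ℝ → ℝ) (hFpos : ∀ t : ℝ, ηb₀ < t → 0 < F t) :
    ∃ B : ℝ, 1 ≤ B ∧ B = C ^ (1 / (χ₁ + 1)) ∧
      ∀ σ ∈ Ioc (0:ℝ) 1, ∀ t : ℝ, ηb₀ < t →
        σ ^ (1 / (χ₁ + 1)) / Kinv (σ * F t) ≤ B / Kinv (F t) := by
  have hα : 0 < χ₁ + 1 := by linarith
  refine ⟨_, Real.one_le_rpow hC (by positivity), rfl, ?_⟩
  rintro σ ⟨hσ0, hσ1⟩ t ht
  set g : ℝ → ℝ := fun s => s * φ' s / l s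
  set h : ℝ → ℝ := fun t => t ^ (1 - χ₁) * φ' t / l t
  have hgc : ContinuousOn g (Ioi 0) :=
    (continuousOn_id.mul hφ'c).div (hlc.mono Ioi_subset_Ici_self) fun s hs => (hlpos s hs).ne'
  have hhpos : ∀ s, 0 < s → 0 < h s := fun s hs => by
    have := hφ'pos s hs; have := hlpos s hs; positivity
  have hgh : ∀ s, 0 < s → g s = s ^ χ₁ * h s := fun s hs => by
    simp only [g, h]
    rw [← mul_div_assoc, ← mul_assoc, ← Real.rpow_add hs, add_sub_cancel, Real.rpow_one]
  have hKfun : K = fun t => ∫ s in (0:ℝ)..t, g s := funext hK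
  have hKC : CIncreasingOn C (fun t => K t / t ^ (χ₁ + 1)) (Ioi 0) := by
    simpa only [hK] using
      cIncreasingOn_integral_div_rpow hgc hχ₁ hchi1 (fun s hs => (hhpos s hs).le) hgh
  have hmono : StrictMonoOn K (Ici 0) :=
    hKfun ▸ strictMonoOn_integral_of_cIncreasingOn hgc hχ₁ hchi1 hhpos hgh
  have hpreimage : ∀ u, 0 < u → ∃ x, 0 < x ∧ K x = u ∧ Kinv u = x := fun u hu => by
    obtain ⟨x, hx, hKx⟩ :=
      hKfun ▸ surjOn_integral_of_cIncreasingOn hgc hχ₁ hchi1 hhpos hgh hu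
    exact ⟨x, hx, hKx, hKx ▸ hKinv x hx.le⟩
  obtain ⟨x, hx, hKx, hKinvx⟩ := hpreimage _ (hFpos t ht)
  obtain ⟨y, hy, hKy, hKinvy⟩ := hpreimage _ (mul_pos hσ0 (hFpos t ht))
  rw [hKinvx, hKinvy, div_le_div_iff₀ hy hx]
  exact rpow_mul_le_of_cIncreasingOn_div_rpow hα (by linarith) hmono hKC hσ0 (hσ1.trans hC)
    hx hy (hKy.trans (hKx ▸ rfl))

/-- Lemma 8.9: under the condition (χ₁) with `χ₁ > −1`, there is `B ≥ 1`
(one may take `B = C^(1/(χ₁+1))`) such that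
`σ^(1/(χ₁+1))/K⁻¹(σ F(t)) ≤ B/K⁻¹(F(t))` for every `σ ∈ (0,1]` and `t > η̄₀`. -/
theorem stmt_16
    (φ φ' l : ℝ → ℝ)
    (hφc : ContinuousOn φ (Ici 0)) (hφ0 : φ 0 = 0)
    (hφd : ∀ t : ℝ, 0 < t → HasDerivAt φ (φ' t) t)
    (hφ'c : ContinuousOn φ' (Ioi 0))
    (hφ'pos : ∀ t : ℝ, 0 < t → 0 < φ' t)
    (hlc : ContinuousOn l (Ici 0)) (hlpos : ∀ t : ℝ, 0 < t → 0 < l t)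
    (χ₁ C : ℝ) (hχ₁ : -1 < χ₁) (hC : 1 ≤ C)
    (hchi1 : CIncreasingOn C (fun t => t ^ (1 - χ₁) * φ' t / l t) (Ioi 0))
    (K Kinv : ℝ → ℝ)
    (hK : ∀ t, K t = ∫ s in (0:ℝ)..t, s * φ' s / l s)
    (hKinv : ∀ t : ℝ, 0 ≤ t → Kinv (K t) = t)
    (ηb₀ : ℝ) (hηb₀ : 0 ≤ ηb₀)
    (F : ℝ → ℝ) (hFpos : ∀ t : ℝ, ηb₀ < t → 0 < F t) :
    ∃ B : ℝ, 1 ≤ B ∧ B = C ^ (1 / (χ₁ + 1)) ∧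
      ∀ σ ∈ Ioc (0:ℝ) 1, ∀ t : ℝ, ηb₀ < t →
        σ ^ (1 / (χ₁ + 1)) / Kinv (σ * F t) ≤ B / Kinv (F t) :=
  stmt_16_general φ' l hφ'c hφ'pos hlc hlpos χ₁ C hχ₁ hC hchi1 K Kinv hK hKinv ηb₀ F hFpos
end
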